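/- arXiv:1301.2783 — 10 statements merged into one kernel-verified Lean document; each statement's English description precedes it below -/
import Mathlib

section
/- For every real x and every natural number n ≥ 1, |e^{ix} - ∑_{k=0}^{n-1} (ix)^k/k! - (n/(2(n+1)))·(ix)^n/n!| ≤ ((n+2)/(2(n+1)))·|x|^n/n! (Prawitz's inequality). -/
/-!
Set `w₀(x) = e^{ix}` and `wₙ₊₁ = (n+1)(-i)(wₙ - xⁿ)`, so that
`e^{ix} = ∑_{k<n} (ix)^k/k! + iⁿ wₙ(x)/n!` and `wₙ₊₁' = (n+1) wₙ`. Squared and cleared of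
denominators, the inequality says `gap n x = x^{2n} + n xⁿ Re wₙ - (n+1)|wₙ|² ≥ 0`.
For `x ≥ 0` this is a chain of monotonicity arguments from `0`: `gapₙ' = n x^{n-1} slopeₙ`
with `slopeₙ = (n+2)(xⁿ - Re wₙ) - x Im wₙ`, and `slopeₙ₊₁' = (n+1) slopeₙ`, which reduces
everything to `slope₁ x = 2x - 3 sin x + x cos x ≥ 0`. Negative `x` follows from
`wₙ(-x) = (-1)ⁿ conj (wₙ(x))`.
-/

open Real Set
open Complex (I)
open ComplexConjugate

lemma le_of_hasDerivAt_of_nonneg {f f' : ℝ → ℝ} {a b : ℝ} (hab : a ≤ b)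
    (hf : ∀ y ∈ Icc a b, HasDerivAt f (f' y) y) (hf' : ∀ y ∈ Ioo a b, 0 ≤ f' y) :
    f a ≤ f b :=
  monotoneOn_of_hasDerivWithinAt_nonneg (convex_Icc a b)
    (fun y hy ↦ (hf y hy).continuousAt.continuousWithinAt)
    (fun y hy ↦ (hf y (interior_subset hy)).hasDerivWithinAt) (by simpa using hf')
    (left_mem_Icc.2 hab) (right_mem_Icc.2 hab) hab

lemma sin_sub_mul_cos_nonneg {u : ℝ} (h0 : 0 ≤ u) (hπ : u ≤ π) : 0 ≤ sin u - u * cos u := by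
  have := le_of_hasDerivAt_of_nonneg (f := fun v ↦ sin v - v * cos v) (f' := fun v ↦ v * sin v) h0
    (fun v _ ↦
      ((hasDerivAt_sin v).sub ((hasDerivAt_id' v).mul (hasDerivAt_cos v))).congr_deriv (by ring))
    (fun v hv ↦ mul_nonneg hv.1.le (sin_nonneg_of_nonneg_of_le_pi hv.1.le (hv.2.le.trans hπ)))
  simpa using this

lemma mul_sin_le_two_sub_two_mul_cos {y : ℝ} (h0 : 0 ≤ y) (h2π : y ≤ 2 * π) :
    y * sin y ≤ 2 - 2 * cos y := by
  -- with `y = 2u`, `2 - 2 cos y - y sin y = 4 sin u (sin u - u cos u)`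
  obtain ⟨u, rfl⟩ : ∃ u, y = 2 * u := ⟨y / 2, by ring⟩
  have hs : 0 ≤ sin u := sin_nonneg_of_nonneg_of_le_pi (by linarith) (by linarith)
  have hq := sin_sub_mul_cos_nonneg (u := u) (by linarith) (by linarith)
  rw [cos_two_mul, sin_two_mul]
  nlinarith [mul_nonneg hs hq, sin_sq_add_cos_sq u]

lemma three_mul_sin_le {y : ℝ} (h0 : 0 ≤ y) : 3 * sin y ≤ 2 * y + y * cos y := by
  rcases le_or_gt y (2 * π) with h2π | h2π
  · have := le_of_hasDerivAt_of_nonneg (f := fun v ↦ 2 * v - 3 * sin v + v * cos v)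
      (f' := fun v ↦ 2 - 2 * cos v - v * sin v) h0 (fun v _ ↦ by
        refine ((((hasDerivAt_id' v).const_mul 2).sub ((hasDerivAt_sin v).const_mul 3)).add
          ((hasDerivAt_id' v).mul (hasDerivAt_cos v))).congr_deriv ?_
        ring)
      (fun v hv ↦ by linarith [mul_sin_le_two_sub_two_mul_cos hv.1.le (hv.2.le.trans h2π)])
    simp only [mul_zero, sin_zero, sub_self, cos_zero, mul_one, add_zero] at this
    linarith
  · nlinarith [sin_le_one y, mul_nonneg h0 (by linarith [neg_one_le_cos y] : 0 ≤ 1 + cos y),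
      pi_gt_three]

namespace Prawitz

noncomputable def expRemainder : ℕ → ℝ → ℂ
  | 0, x => Complex.exp (I * x)
  | n + 1, x => (n + 1) * -I * (expRemainder n x - (x : ℂ) ^ n)

theorem exp_I_mul_eq_sum_add (n : ℕ) (x : ℝ) :
    Complex.exp (I * x) = ∑ k ∈ Finset.range n, (I * x) ^ k / k.factorial
      + I ^ n * expRemainder n x / n.factorial := by
  induction n with
  | zero => simp [expRemainder]
  | succ n ih =>
    rw [ih, Finset.sum_range_succ, expRemainder, Nat.factorial_succ]
    push_cast
    field_simp
    ring_nf
    simp only [Complex.I_sq]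
    ring

theorem expRemainder_succ_re (n : ℕ) (x : ℝ) :
    (expRemainder (n + 1) x).re = (n + 1) * (expRemainder n x).im := by
  simp [expRemainder, ← Complex.ofReal_pow]

theorem expRemainder_succ_im (n : ℕ) (x : ℝ) :
    (expRemainder (n + 1) x).im = (n + 1) * (x ^ n - (expRemainder n x).re) := by
  simp [expRemainder, ← Complex.ofReal_pow]
  ring

theorem expRemainder_succ_zero (n : ℕ) : expRemainder (n + 1) 0 = 0 := by
  induction n with
  | zero => simp [expRemainder]
  | succ n ih => rw [expRemainder, ih]; simp

theorem expRemainder_neg (n : ℕ) (x : ℝ) :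
    expRemainder n (-x) = (-1) ^ n * conj (expRemainder n x) := by
  induction n with
  | zero => simp [expRemainder, ← Complex.exp_conj]
  | succ n ih =>
    simp only [expRemainder, ih, map_mul, map_sub, map_add, map_neg, map_pow, Complex.conj_I,
      Complex.conj_ofReal, map_natCast, map_one, Complex.ofReal_neg]
    ring

theorem hasDerivAt_expRemainder (n : ℕ) (x : ℝ) :
    HasDerivAt (expRemainder (n + 1)) ((n + 1) * expRemainder n x) x := by
  induction n generalizing x with
  | zero =>
    have h := (((hasDerivAt_id' x).ofReal_comp.const_mul I).cexp.sub_const 1).const_mul (-I)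
    have e : expRemainder 1 = fun y : ℝ ↦ -I * (Complex.exp (I * y) - 1) := by
      ext y; simp [expRemainder]
    rw [e]
    refine h.congr_deriv ?_
    simp only [expRemainder]
    push_cast
    ring_nf
    simp [Complex.I_sq]
  | succ n ih =>
    have h := ((ih x).sub ((hasDerivAt_id' x).ofReal_comp.pow (n + 1))).const_mul
      ((n + 2 : ℂ) * -I)
    have e : expRemainder (n + 2) =
        fun y : ℝ ↦ (n + 2 : ℂ) * -I * (expRemainder (n + 1) y - (y : ℂ) ^ (n + 1)) := by
      ext y; simp only [expRemainder]; push_cast; ring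
    rw [e]
    refine h.congr_deriv ?_
    simp only [expRemainder, Nat.add_sub_cancel]
    push_cast
    ring

theorem expRemainder_zero_re (x : ℝ) : (expRemainder 0 x).re = cos x := by
  simp [expRemainder, mul_comm I, Complex.exp_ofReal_mul_I_re]

theorem expRemainder_zero_im (x : ℝ) : (expRemainder 0 x).im = sin x := by
  simp [expRemainder, mul_comm I, Complex.exp_ofReal_mul_I_im]

theorem hasDerivAt_expRemainder_re (n : ℕ) (x : ℝ) :
    HasDerivAt (fun y ↦ (expRemainder (n + 1) y).re) ((n + 1) * (expRemainder n x).re) x :=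
  (Complex.reCLM.hasFDerivAt.comp_hasDerivAt x (hasDerivAt_expRemainder n x)).congr_deriv
    (by simp)

theorem hasDerivAt_expRemainder_im (n : ℕ) (x : ℝ) :
    HasDerivAt (fun y ↦ (expRemainder (n + 1) y).im) ((n + 1) * (expRemainder n x).im) x :=
  (Complex.imCLM.hasFDerivAt.comp_hasDerivAt x (hasDerivAt_expRemainder n x)).congr_deriv
    (by simp)

noncomputable def slope (n : ℕ) (x : ℝ) : ℝ :=
  (n + 2) * (x ^ n - (expRemainder n x).re) - x * (expRemainder n x).im

noncomputable def gap (n : ℕ) (x : ℝ) : ℝ :=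
  x ^ (2 * n) + n * x ^ n * (expRemainder n x).re
    - (n + 1) * ((expRemainder n x).re ^ 2 + (expRemainder n x).im ^ 2)

theorem hasDerivAt_slope (n : ℕ) (x : ℝ) :
    HasDerivAt (slope (n + 1)) ((n + 1) * slope n x) x := by
  have h := (((hasDerivAt_pow (n + 1) x).sub (hasDerivAt_expRemainder_re n x)).const_mul
    (((n + 1 : ℕ) : ℝ) + 2)).sub ((hasDerivAt_id' x).mul (hasDerivAt_expRemainder_im n x))
  refine h.congr_deriv ?_
  rw [slope, expRemainder_succ_im, Nat.add_sub_cancel]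
  push_cast
  ring

theorem slope_one (x : ℝ) : slope 1 x = 2 * x - 3 * sin x + x * cos x := by
  simp only [slope, expRemainder_succ_re, expRemainder_succ_im, expRemainder_zero_re,
    expRemainder_zero_im]
  push_cast
  ring

theorem slope_succ_zero (n : ℕ) : slope (n + 1) 0 = 0 := by
  simp [slope, expRemainder_succ_zero]

theorem slope_nonneg {n : ℕ} (hn : 1 ≤ n) {x : ℝ} (hx : 0 ≤ x) : 0 ≤ slope n x := by
  induction n, hn using Nat.le_induction generalizing x with
  | base => rw [slope_one]; linarith [three_mul_sin_le hx]
  | succ n hn ih =>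
    simpa [slope_succ_zero] using le_of_hasDerivAt_of_nonneg hx
      (fun y _ ↦ hasDerivAt_slope n y) (fun y hy ↦ mul_nonneg (by positivity) (ih hy.1.le))

theorem hasDerivAt_gap (n : ℕ) (x : ℝ) :
    HasDerivAt (gap (n + 1)) ((n + 1) * x ^ n * slope (n + 1) x) x := by
  have hA := hasDerivAt_expRemainder_re n x
  have hB := hasDerivAt_expRemainder_im n x
  have h := ((hasDerivAt_pow (2 * (n + 1)) x).add
    (((hasDerivAt_pow (n + 1) x).const_mul ((n + 1 : ℕ) : ℝ)).mul hA)).sub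
    (((hA.pow 2).add (hB.pow 2)).const_mul (((n + 1 : ℕ) : ℝ) + 1))
  refine h.congr_deriv ?_
  rw [slope, expRemainder_succ_re, expRemainder_succ_im, Nat.add_sub_cancel,
    show 2 * (n + 1) - 1 = 2 * n + 1 by omega]
  push_cast
  ring

theorem gap_succ_zero (n : ℕ) : gap (n + 1) 0 = 0 := by
  simp [gap, expRemainder_succ_zero]

theorem gap_succ_nonneg (n : ℕ) {x : ℝ} (hx : 0 ≤ x) : 0 ≤ gap (n + 1) x := by
  simpa [gap_succ_zero] using le_of_hasDerivAt_of_nonneg hx (fun y _ ↦ hasDerivAt_gap n y)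
    (fun y hy ↦ mul_nonneg (mul_nonneg (by positivity) (pow_nonneg hy.1.le n))
      (slope_nonneg (by omega) hy.1.le))

theorem gap_eq (n : ℕ) (x : ℝ) :
    gap n x = (n + 1) * (((n + 2) / (2 * (n + 1)) * x ^ n) ^ 2
      - ‖expRemainder n x - ((n / (2 * (n + 1)) * x ^ n : ℝ) : ℂ)‖ ^ 2) := by
  rw [Complex.sq_norm, Complex.normSq_apply]
  simp only [gap, Complex.sub_re, Complex.sub_im, Complex.ofReal_re, Complex.ofReal_im]
  field_simp
  ring

theorem norm_expRemainder_sub_le {n : ℕ} (hn : 1 ≤ n) (x : ℝ) :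
    ‖expRemainder n x - ((n / (2 * (n + 1)) * x ^ n : ℝ) : ℂ)‖
      ≤ (n + 2) / (2 * (n + 1)) * |x| ^ n := by
  wlog hx : 0 ≤ x generalizing x
  · have hneg : expRemainder n (-x) - ((n / (2 * (n + 1)) * (-x) ^ n : ℝ) : ℂ)
        = (-1) ^ n * conj (expRemainder n x - ((n / (2 * (n + 1)) * x ^ n : ℝ) : ℂ)) := by
      rw [expRemainder_neg, map_sub, Complex.conj_ofReal, neg_pow]
      push_cast
      ring
    have h := this (-x) (by linarith)
    rwa [hneg, norm_mul, norm_pow, norm_neg, norm_one, one_pow, one_mul, Complex.norm_conj,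
      abs_neg] at h
  obtain ⟨m, rfl⟩ : ∃ m, n = m + 1 := ⟨n - 1, by omega⟩
  have hsq := gap_eq (m + 1) x ▸ gap_succ_nonneg m hx
  rw [abs_of_nonneg hx]
  refine (pow_le_pow_iff_left₀ (norm_nonneg _) (by positivity) two_ne_zero).1 ?_
  nlinarith [hsq]

theorem exp_sub_sum_sub_eq (n : ℕ) (x c : ℝ) :
    Complex.exp (I * x) - ∑ k ∈ Finset.range n, (I * x) ^ k / k.factorial
      - c * (I * x) ^ n / n.factorial
      = I ^ n * (expRemainder n x - ((c * x ^ n : ℝ) : ℂ)) / n.factorial := by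
  rw [exp_I_mul_eq_sum_add n x]
  push_cast
  ring

end Prawitz

theorem prawitz_inequality (x : ℝ) (n : ℕ) (hn : 1 ≤ n) :
    ‖Complex.exp (Complex.I * x) -
      ∑ k ∈ Finset.range n, (Complex.I * x) ^ k / (k.factorial : ℂ) -
      ((n : ℂ) / (2 * ((n : ℂ) + 1))) * (Complex.I * x) ^ n / (n.factorial : ℂ)‖ ≤
      ((n : ℝ) + 2) / (2 * ((n : ℝ) + 1)) * |x| ^ n / (n.factorial : ℝ) := by
  have hc : (n : ℂ) / (2 * ((n : ℂ) + 1)) = ((n / (2 * (n + 1)) : ℝ) : ℂ) := by push_cast; rfl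
  rw [hc, Prawitz.exp_sub_sum_sub_eq, norm_div, norm_mul, norm_pow, Complex.norm_I, one_pow,
    one_mul, Complex.norm_natCast]
  gcongr
  exact Prawitz.norm_expRemainder_sub_le hn x
end

section
/- Let X be a real random variable with E|X|^n < ∞ for some n ≥ 1, characteristic function f(t) = E e^{itX}, and moments α_k = E X^k, β_n = E|X|^n. Then for all t ∈ ℝ and λ ≥ 0, |f(t) - ∑_{k=0}^{n-1} α_k (it)^k/k! - λ α_n (it)^n/n!| ≤ q_n(λ) · β_n |t|^n / n!, where q_n(λ) = sup_{x>0} (n!/x^n)·|e^{ix} - ∑_{k=0}^{n-1}(ix)^k/k! - λ(ix)^n/n!|. -/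
/-!
Write `R_n(x) = e^{ix} - ∑_{k<n} (ix)^k/k!`. Since `R_{n+1}' = i R_n` and `R_{n+1}(0) = 0`,
induction on `n` gives `|R_n(x)| ≤ |x|^n/n!`; in particular the supremum `q_n(λ)` is finite
(at most `1 + |λ|`). The corrected remainder `R_n(x) - λ (ix)^n/n!` is bounded by
`q_n(λ) |x|^n/n!` for `x > 0` by definition of `q_n(λ)`, for `x = 0` by continuity, and for
`x < 0` by the symmetry `R(-x) = conj R(x)`. Putting `x = tX` and taking expectations, the
left-hand side of the theorem is the expectation of this corrected remainder, so it is at most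
`q_n(λ) |t|^n E|X|^n / n!`.
-/

open MeasureTheory Complex Finset Nat ComplexConjugate

noncomputable def expIRem (n : ℕ) (x : ℝ) : ℂ :=
  exp (I * x) - ∑ k ∈ range n, (I * x) ^ k / (k ! : ℂ)

@[fun_prop]
lemma continuous_expIRem (n : ℕ) : Continuous (expIRem n) := by
  unfold expIRem; fun_prop

lemma expIRem_succ_zero (n : ℕ) : expIRem (n + 1) 0 = 0 := by
  simp [expIRem, sum_range_succ']

lemma expIRem_neg (n : ℕ) (x : ℝ) : expIRem n (-x) = conj (expIRem n x) := by
  simp only [expIRem, map_sub, map_sum, ← exp_conj, map_div₀, map_pow, map_mul, conj_I,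
    conj_ofReal, map_natCast, ofReal_neg, mul_neg, neg_mul]

lemma hasDerivAt_I_mul_pow_succ_div_factorial (k : ℕ) (x : ℝ) :
    HasDerivAt (fun y : ℝ => (I * y) ^ (k + 1) / ((k + 1)! : ℂ)) (I * ((I * x) ^ k / k !)) x := by
  refine (((((hasDerivAt_id (x : ℂ)).const_mul I).pow (k + 1)).div_const
    ((k + 1)! : ℂ)).comp_ofReal).congr_deriv ?_
  rw [Nat.factorial_succ, Nat.add_sub_cancel]
  push_cast
  field_simp
  simp

lemma hasDerivAt_expIRem (n : ℕ) (x : ℝ) :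
    HasDerivAt (expIRem (n + 1)) (I * expIRem n x) x := by
  have hexp : HasDerivAt (fun y : ℝ => exp (I * y)) (exp (I * x) * I) x := by
    simpa using (((hasDerivAt_id (x : ℂ)).const_mul I).cexp).comp_ofReal
  have hsum := HasDerivAt.fun_sum (u := range n)
    fun k _ => hasDerivAt_I_mul_pow_succ_div_factorial k x
  have hrem : expIRem (n + 1) =
      fun y : ℝ => exp (I * y) - ∑ k ∈ range n, (I * y) ^ (k + 1) / ((k + 1)! : ℂ) - 1 := by
    ext y
    simp only [expIRem, sum_range_succ']
    ring_nf
  rw [hrem]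
  refine ((hexp.fun_sub hsum).sub_const 1).congr_deriv ?_
  rw [expIRem, mul_sub, mul_sum]
  ring

lemma norm_expIRem_le_of_nonneg (n : ℕ) {x : ℝ} (hx : 0 ≤ x) :
    ‖expIRem n x‖ ≤ x ^ n / n ! := by
  induction n generalizing x with
  | zero => simp [expIRem, norm_exp_I_mul_ofReal]
  | succ n ih =>
    have hftc : ∫ s in (0 : ℝ)..x, I * expIRem n s = expIRem (n + 1) x := by
      rw [intervalIntegral.integral_eq_sub_of_hasDerivAt (fun s _ => hasDerivAt_expIRem n s)
        ((continuous_const.mul (continuous_expIRem n)).intervalIntegrable 0 x),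
        expIRem_succ_zero, sub_zero]
    rw [← hftc]
    calc ‖∫ s in (0 : ℝ)..x, I * expIRem n s‖
        ≤ ∫ s in (0 : ℝ)..x, ‖I * expIRem n s‖ :=
          intervalIntegral.norm_integral_le_integral_norm hx
      _ ≤ ∫ s in (0 : ℝ)..x, s ^ n / n ! := by
          refine intervalIntegral.integral_mono_on hx
            ((continuous_const.mul (continuous_expIRem n)).norm.intervalIntegrable 0 x)
            ((by fun_prop : Continuous fun s : ℝ => s ^ n / n !).intervalIntegrable 0 x)
            fun s hs => ?_
          rw [norm_mul, norm_I, one_mul]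
          exact ih hs.1
      _ = x ^ (n + 1) / (n + 1)! := by
          rw [intervalIntegral.integral_div, integral_pow, Nat.factorial_succ]
          push_cast
          field_simp
          simp

lemma norm_expIRem_le (n : ℕ) (x : ℝ) : ‖expIRem n x‖ ≤ |x| ^ n / n ! := by
  rcases le_or_gt 0 x with hx | hx
  · simpa [abs_of_nonneg hx] using norm_expIRem_le_of_nonneg n hx
  · simpa [expIRem_neg, abs_of_neg hx] using norm_expIRem_le_of_nonneg n (neg_nonneg.2 hx.le)

noncomputable def weightedExpIRem (n : ℕ) (l x : ℝ) : ℂ :=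
  expIRem n x - l * (I * x) ^ n / (n ! : ℂ)

/-- The constant `q_n(λ)`; its set is bounded by `1 + |λ|`, so this `sSup` is not a junk value. -/
noncomputable def weightedExpIRemConst (n : ℕ) (l : ℝ) : ℝ :=
  sSup {y : ℝ | ∃ x : ℝ, 0 < x ∧ y = (n ! : ℝ) / x ^ n * ‖weightedExpIRem n l x‖}

@[fun_prop]
lemma continuous_weightedExpIRem (n : ℕ) (l : ℝ) : Continuous (weightedExpIRem n l) := by
  unfold weightedExpIRem; fun_prop

lemma weightedExpIRem_neg (n : ℕ) (l x : ℝ) :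
    weightedExpIRem n l (-x) = conj (weightedExpIRem n l x) := by
  simp only [weightedExpIRem, expIRem_neg, map_sub, map_div₀, map_mul, map_pow, conj_I,
    conj_ofReal, map_natCast, ofReal_neg, mul_neg, neg_mul]

lemma norm_weightedExpIRem_le_abs_pow (n : ℕ) (l x : ℝ) :
    ‖weightedExpIRem n l x‖ ≤ (1 + |l|) * |x| ^ n / n ! := by
  calc ‖weightedExpIRem n l x‖
      ≤ ‖expIRem n x‖ + ‖(l : ℂ) * (I * x) ^ n / (n ! : ℂ)‖ := norm_sub_le _ _
    _ ≤ |x| ^ n / n ! + |l| * |x| ^ n / n ! := by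
        gcongr
        · exact norm_expIRem_le n x
        · simp
    _ = (1 + |l|) * |x| ^ n / n ! := by ring

lemma norm_weightedExpIRem_le_of_pos (n : ℕ) (l : ℝ) {x : ℝ} (hx : 0 < x) :
    ‖weightedExpIRem n l x‖ ≤ weightedExpIRemConst n l * x ^ n / n ! := by
  have hbdd : BddAbove
      {y : ℝ | ∃ x : ℝ, 0 < x ∧ y = (n ! : ℝ) / x ^ n * ‖weightedExpIRem n l x‖} := by
    refine ⟨1 + |l|, ?_⟩
    rintro y ⟨z, hz, rfl⟩
    calc (n ! : ℝ) / z ^ n * ‖weightedExpIRem n l z‖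
        ≤ (n ! : ℝ) / z ^ n * ((1 + |l|) * |z| ^ n / n !) := by
          gcongr; exact norm_weightedExpIRem_le_abs_pow n l z
      _ = 1 + |l| := by
          rw [abs_of_pos hz]
          field_simp
  have hle := le_csSup hbdd ⟨x, hx, rfl⟩
  rw [← weightedExpIRemConst, div_mul_eq_mul_div, div_le_iff₀ (by positivity)] at hle
  rw [le_div_iff₀ (by positivity)]
  linarith

lemma norm_weightedExpIRem_le (n : ℕ) (l x : ℝ) :
    ‖weightedExpIRem n l x‖ ≤ weightedExpIRemConst n l * |x| ^ n / n ! := by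
  have hclosed : IsClosed
      {x : ℝ | ‖weightedExpIRem n l x‖ ≤ weightedExpIRemConst n l * |x| ^ n / n !} :=
    isClosed_le (by fun_prop) (by fun_prop)
  have hnonneg : Set.Ici 0 ⊆
      {x : ℝ | ‖weightedExpIRem n l x‖ ≤ weightedExpIRemConst n l * |x| ^ n / n !} := by
    rw [← closure_Ioi]
    refine hclosed.closure_subset_iff.2 fun y (hy : 0 < y) => ?_
    simpa [abs_of_pos hy] using norm_weightedExpIRem_le_of_pos n l hy
  rcases le_or_gt 0 x with hx | hx
  · exact hnonneg hx
  · simpa [weightedExpIRem_neg] using hnonneg (neg_nonneg.2 hx.le)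

lemma weightedExpIRem_mul (n : ℕ) (l t x : ℝ) :
    weightedExpIRem n l (t * x) = exp (I * t * x) -
      ∑ k ∈ range n, ((x ^ k : ℝ) : ℂ) * ((I * t) ^ k / k !) -
      l * (((x ^ n : ℝ) : ℂ) * ((I * t) ^ n / n !)) := by
  simp only [weightedExpIRem, expIRem, ofReal_mul, ofReal_pow, ← mul_assoc, mul_pow]
  ring_nf

section Moments

variable {Ω : Type*} [MeasurableSpace Ω] {μ : Measure Ω} [IsFiniteMeasure μ] {X : Ω → ℝ}

lemma integrable_pow_of_integrable_abs_pow (hX : AEStronglyMeasurable X μ) {k n : ℕ}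
    (hkn : k ≤ n) (hint : Integrable (fun ω => |X ω| ^ n) μ) :
    Integrable (fun ω => X ω ^ k) μ := by
  refine (integrable_norm_iff (hX.pow k)).1 ?_
  simpa using integrable_norm_pow_of_le hX hkn (by simpa using hint)

lemma integral_weightedExpIRem_mul (hX : AEMeasurable X μ) {n : ℕ}
    (hmom : ∀ k ≤ n, Integrable (fun ω => X ω ^ k) μ) (l t : ℝ) :
    ∫ ω, weightedExpIRem n l (t * X ω) ∂μ =
      (∫ ω, exp (I * t * X ω) ∂μ) -
        ∑ k ∈ range n, ((∫ ω, X ω ^ k ∂μ : ℝ) : ℂ) * (I * t) ^ k / (k ! : ℂ) -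
        l * ((∫ ω, X ω ^ n ∂μ : ℝ) : ℂ) * (I * t) ^ n / (n ! : ℂ) := by
  have hexp : Integrable (fun ω => exp (I * t * X ω)) μ :=
    Integrable.of_bound (by fun_prop) 1 (ae_of_all _ fun ω => by
      rw [mul_assoc, ← ofReal_mul, norm_exp_I_mul_ofReal])
  have hterm : ∀ k ≤ n, ∀ c : ℂ, Integrable (fun ω => ((X ω ^ k : ℝ) : ℂ) * c) μ :=
    fun k hk c => (hmom k hk).ofReal.mul_const c
  have hsum : Integrable (fun ω => ∑ k ∈ range n, ((X ω ^ k : ℝ) : ℂ) * ((I * t) ^ k / k !)) μ :=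
    integrable_finsetSum _ fun k hk => hterm k (mem_range.1 hk).le _
  simp_rw [weightedExpIRem_mul]
  rw [integral_sub (f := fun ω => exp (I * t * X ω) - _) (hexp.sub hsum)
      ((hterm n le_rfl _).const_mul _), integral_sub hexp hsum, integral_finsetSum _ fun k hk => hterm k (mem_range.1 hk).le _, integral_const_mul]
  simp only [integral_mul_const, integral_complex_ofReal, mul_div_assoc, mul_assoc]

end Moments

theorem chf_taylor_expansion_bound_general
    {Ω : Type*} [MeasurableSpace Ω] (μ : Measure Ω) [IsProbabilityMeasure μ]
    (X : Ω → ℝ) (hX : Measurable X) (n : ℕ)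
    (hint : Integrable (fun ω => |X ω| ^ n) μ) (t l : ℝ) :
    ‖(∫ ω, Complex.exp (Complex.I * t * X ω) ∂μ) -
      ∑ k ∈ Finset.range n, ((∫ ω, X ω ^ k ∂μ : ℝ) : ℂ) * (Complex.I * t) ^ k / (k.factorial : ℂ) -
      (l : ℂ) * ((∫ ω, X ω ^ n ∂μ : ℝ) : ℂ) * (Complex.I * t) ^ n / (n.factorial : ℂ)‖ ≤
      (sSup {y : ℝ | ∃ x : ℝ, 0 < x ∧
        y = (n.factorial : ℝ) / x ^ n *
          ‖Complex.exp (Complex.I * x) -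
            ∑ k ∈ Finset.range n, (Complex.I * x) ^ k / (k.factorial : ℂ) -
            (l : ℂ) * (Complex.I * x) ^ n / (n.factorial : ℂ)‖}) *
        (∫ ω, |X ω| ^ n ∂μ) * |t| ^ n / (n.factorial : ℝ) := by
  have hmom : ∀ k ≤ n, Integrable (fun ω => X ω ^ k) μ := fun k hk =>
    integrable_pow_of_integrable_abs_pow hX.aestronglyMeasurable hk hint
  rw [← integral_weightedExpIRem_mul hX.aemeasurable hmom]
  change _ ≤ weightedExpIRemConst n l * _ * _ / _
  calc ‖∫ ω, weightedExpIRem n l (t * X ω) ∂μ‖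
      ≤ ∫ ω, weightedExpIRemConst n l * |t| ^ n / n ! * |X ω| ^ n ∂μ := by
        refine norm_integral_le_of_norm_le (hint.const_mul _) (ae_of_all _ fun ω => ?_)
        calc ‖weightedExpIRem n l (t * X ω)‖
            ≤ weightedExpIRemConst n l * |t * X ω| ^ n / n ! := norm_weightedExpIRem_le n l _
          _ = _ := by rw [abs_mul, mul_pow]; ring
    _ = weightedExpIRemConst n l * (∫ ω, |X ω| ^ n ∂μ) * |t| ^ n / n ! := by
        rw [integral_const_mul]; ring

theorem chf_taylor_expansion_bound
    {Ω : Type*} [MeasurableSpace Ω] (μ : Measure Ω) [IsProbabilityMeasure μ]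
    (X : Ω → ℝ) (hX : Measurable X) (n : ℕ) (hn : 1 ≤ n)
    (hint : Integrable (fun ω => |X ω| ^ n) μ) (t l : ℝ) (hl : 0 ≤ l) :
    ‖(∫ ω, Complex.exp (Complex.I * t * X ω) ∂μ) -
      ∑ k ∈ Finset.range n, ((∫ ω, X ω ^ k ∂μ : ℝ) : ℂ) * (Complex.I * t) ^ k / (k.factorial : ℂ) -
      (l : ℂ) * ((∫ ω, X ω ^ n ∂μ : ℝ) : ℂ) * (Complex.I * t) ^ n / (n.factorial : ℂ)‖ ≤
      (sSup {y : ℝ | ∃ x : ℝ, 0 < x ∧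
        y = (n.factorial : ℝ) / x ^ n *
          ‖Complex.exp (Complex.I * x) -
            ∑ k ∈ Finset.range n, (Complex.I * x) ^ k / (k.factorial : ℂ) -
            (l : ℂ) * (Complex.I * x) ^ n / (n.factorial : ℂ)‖}) *
        (∫ ω, |X ω| ^ n ∂μ) * |t| ^ n / (n.factorial : ℝ) :=
  chf_taylor_expansion_bound_general μ X hX n hint t l
end

section
/- Let θ₃* be the unique root in (0, 2π) of the equation x² + 2x·sin x + 6(cos x − 1) = 0. Then sup_{x>0} (cos x − 1 + x²/2)/x³ = (cos θ₃* − 1 + (θ₃*)²/2)/(θ₃*)³ = (θ₃* − sin θ₃*)/(3(θ₃*)²), and this value κ₃ satisfies 0.099161 < κ₃ < 0.099162. -/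
/-!
Write `f x = (cos x - 1 + x ^ 2 / 2) / x ^ 3` and `G x = x ^ 2 + 2 x sin x + 6 (cos x - 1)`, so
that `f' x = -G x / (2 x ^ 4)`. Certified values of `sin` and `cos` at `3.995895` and `3.995896`
(alternating Taylor brackets at a quarter of the angle, pushed through two angle doublings) show
that `G` changes sign from negative to positive between these points, so `θ` lies there. As `θ` is
the only zero of `G` in `(0, 2π)` and `G > 0` beyond `5`, `G` keeps one sign on each side of `θ`:
`f` increases up to `θ` and decreases after it, so `f θ` is the supremum, and `G θ = 0` rewrites it
as `(θ - sin θ) / (3 θ ^ 2)`. The maximum is at least `f 3.995895 > 0.099161`; since `cos` increases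
on `[π, 2π]`, `cos θ ≤ cos 3.995896` bounds `f θ` from above by `0.099162`.
-/

open Real Set Filter Topology
open scoped Nat
open Finset (range)

theorem pow_div_factorial_add_two_le {x : ℝ} {m : ℕ} (hxm : 0 ≤ x ^ m)
    (hx : x ^ 2 ≤ (m + 1) * (m + 2)) : x ^ (m + 2) / (m + 2)! ≤ x ^ m / m ! := by
  have hpos : (0 : ℝ) < (m + 1) * (m + 2) := by positivity
  calc x ^ (m + 2) / (m + 2)! = x ^ m / m ! * (x ^ 2 / ((m + 1) * (m + 2))) := by
        rw [Nat.factorial_succ, Nat.factorial_succ]; push_cast; field_simp; ring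
    _ ≤ x ^ m / m ! * 1 := by gcongr; exact (div_le_one hpos).2 hx
    _ = x ^ m / m ! := mul_one _

namespace Real

theorem cos_mem_Icc_taylor {x : ℝ} (hx : x ^ 2 ≤ 2) (k : ℕ) :
    cos x ∈ Icc (∑ i ∈ range (2 * k), (-1) ^ i * (x ^ (2 * i) / (2 * i)!))
      (∑ i ∈ range (2 * k + 1), (-1) ^ i * (x ^ (2 * i) / (2 * i)!)) := by
  have hsum : Tendsto (fun n ↦ ∑ i ∈ range n, (-1) ^ i * (x ^ (2 * i) / (2 * i)!)) atTop
      (𝓝 (cos x)) := by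
    simpa only [mul_div_assoc] using (hasSum_cos x).tendsto_sum_nat
  have hanti : Antitone fun i : ℕ ↦ x ^ (2 * i) / (2 * i)! := by
    refine antitone_nat_of_succ_le fun n ↦ ?_
    have := pow_div_factorial_add_two_le (x := x) (m := 2 * n) ((even_two_mul n).pow_nonneg x)
      (by push_cast; nlinarith)
    simpa only [Nat.mul_succ] using this
  exact ⟨hanti.alternating_series_le_tendsto hsum k, hanti.tendsto_le_alternating_series hsum k⟩

theorem sin_mem_Icc_taylor {x : ℝ} (hx₀ : 0 ≤ x) (hx : x ^ 2 ≤ 6) (k : ℕ) :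
    sin x ∈ Icc (∑ i ∈ range (2 * k), (-1) ^ i * (x ^ (2 * i + 1) / (2 * i + 1)!))
      (∑ i ∈ range (2 * k + 1), (-1) ^ i * (x ^ (2 * i + 1) / (2 * i + 1)!)) := by
  have hsum : Tendsto (fun n ↦ ∑ i ∈ range n, (-1) ^ i * (x ^ (2 * i + 1) / (2 * i + 1)!))
      atTop (𝓝 (sin x)) := by
    simpa only [mul_div_assoc] using (hasSum_sin x).tendsto_sum_nat
  have hanti : Antitone fun i : ℕ ↦ x ^ (2 * i + 1) / (2 * i + 1)! := by
    refine antitone_nat_of_succ_le fun n ↦ ?_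
    have := pow_div_factorial_add_two_le (x := x) (m := 2 * n + 1) (by positivity)
      (by push_cast; nlinarith)
    simpa only [Nat.mul_succ, Nat.add_right_comm _ 2 1] using this
  exact ⟨hanti.alternating_series_le_tendsto hsum k, hanti.tendsto_le_alternating_series hsum k⟩

theorem sin_two_mul_mem_Icc {x sl su cl cu : ℝ} (hsl : 0 ≤ sl) (hcl : 0 ≤ cl)
    (hs : sin x ∈ Icc sl su) (hc : cos x ∈ Icc cl cu) :
    sin (2 * x) ∈ Icc (2 * sl * cl) (2 * su * cu) := by
  rw [sin_two_mul]
  constructor <;> nlinarith [hs.1, hs.2, hc.1, hc.2]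

theorem sin_two_mul_mem_Icc_of_cos_nonpos {x sl su cl cu : ℝ} (hsl : 0 ≤ sl) (hcu : cu ≤ 0)
    (hs : sin x ∈ Icc sl su) (hc : cos x ∈ Icc cl cu) :
    sin (2 * x) ∈ Icc (2 * su * cl) (2 * sl * cu) := by
  rw [sin_two_mul]
  constructor <;> nlinarith [hs.1, hs.2, hc.1, hc.2]

theorem cos_two_mul_mem_Icc {x sl su : ℝ} (hsl : 0 ≤ sl) (hs : sin x ∈ Icc sl su) :
    cos (2 * x) ∈ Icc (1 - 2 * su ^ 2) (1 - 2 * sl ^ 2) := by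
  rw [cos_two_mul_eq_one_sub]
  constructor <;> nlinarith [hs.1, hs.2]

theorem sin_cos_four_mul_mem_Icc {y sl su cl cu : ℝ} (hsl : 0 ≤ sl) (hcl : 0 ≤ cl)
    (h2sl : 1 ≤ 2 * sl ^ 2) (hs : sin y ∈ Icc sl su) (hc : cos y ∈ Icc cl cu) :
    sin (4 * y) ∈
      Icc (2 * (2 * su * cu) * (1 - 2 * su ^ 2)) (2 * (2 * sl * cl) * (1 - 2 * sl ^ 2)) ∧
    cos (4 * y) ∈ Icc (1 - 2 * (2 * su * cu) ^ 2) (1 - 2 * (2 * sl * cl) ^ 2) := by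
  have hs2 := sin_two_mul_mem_Icc hsl hcl hs hc
  have hc2 := cos_two_mul_mem_Icc hsl hs
  rw [show 4 * y = 2 * (2 * y) by ring]
  exact ⟨sin_two_mul_mem_Icc_of_cos_nonpos (by positivity) (by linarith) hs2 hc2,
    cos_two_mul_mem_Icc (by positivity) hs2⟩

end Real

theorem IsPreconnected.neg_of_forall_ne_zero {X : Type*} [TopologicalSpace X] {s : Set X}
    {g : X → ℝ} (hs : IsPreconnected s) (hg : ContinuousOn g s) (h0 : ∀ x ∈ s, g x ≠ 0)
    {p : X} (hp : p ∈ s) (hgp : g p < 0) {x : X} (hx : x ∈ s) : g x < 0 := by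
  by_contra! hgx
  obtain ⟨z, hz, hgz⟩ := hs.intermediate_value hp hx hg ⟨hgp.le, hgx⟩
  exact h0 z hz hgz

theorem IsPreconnected.pos_of_forall_ne_zero {X : Type*} [TopologicalSpace X] {s : Set X}
    {g : X → ℝ} (hs : IsPreconnected s) (hg : ContinuousOn g s) (h0 : ∀ x ∈ s, g x ≠ 0)
    {p : X} (hp : p ∈ s) (hgp : 0 < g p) {x : X} (hx : x ∈ s) : 0 < g x :=
  neg_neg_iff_pos.1 <| hs.neg_of_forall_ne_zero (g := fun x ↦ -g x) hg.neg
    (fun x hx ↦ neg_ne_zero.2 (h0 x hx)) hp (neg_neg_iff_pos.2 hgp) hx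

theorem isMaxOn_of_hasDerivAt {f f' : ℝ → ℝ} {a θ : ℝ} (haθ : a < θ)
    (hf : ∀ x ∈ Ioi a, HasDerivAt f (f' x) x) (hinc : ∀ x ∈ Ioo a θ, 0 ≤ f' x)
    (hdec : ∀ x ∈ Ioi θ, f' x ≤ 0) : IsMaxOn f (Ioi a) θ := by
  have hcont : ContinuousOn f (Ioi a) := fun x hx ↦ (hf x hx).continuousAt.continuousWithinAt
  intro x (hx : a < x)
  rcases le_total x θ with hxθ | hθx
  · refine monotoneOn_of_hasDerivWithinAt_nonneg (f' := f') (convex_Icc x θ)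
      (hcont.mono fun y hy ↦ hx.trans_le hy.1) (fun y hy ↦ ?_) (fun y hy ↦ ?_)
      (left_mem_Icc.2 hxθ) (right_mem_Icc.2 hxθ) hxθ
    all_goals rw [interior_Icc] at hy
    · exact (hf y (hx.trans hy.1)).hasDerivWithinAt
    · exact hinc y ⟨hx.trans hy.1, hy.2⟩
  · refine antitoneOn_of_hasDerivWithinAt_nonpos (f' := f') (convex_Icc θ x)
      (hcont.mono fun y hy ↦ haθ.trans_le hy.1) (fun y hy ↦ ?_) (fun y hy ↦ ?_)
      (left_mem_Icc.2 hθx) (right_mem_Icc.2 hθx) hθx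
    all_goals rw [interior_Icc] at hy
    · exact (hf y (haθ.trans hy.1)).hasDerivWithinAt
    · exact hdec y hy.1

namespace Kappa3

noncomputable def ratio (x : ℝ) : ℝ := (cos x - 1 + x ^ 2 / 2) / x ^ 3

noncomputable def crit (x : ℝ) : ℝ := x ^ 2 + 2 * x * sin x + 6 * (cos x - 1)

theorem hasDerivAt_ratio {x : ℝ} (hx : x ≠ 0) :
    HasDerivAt ratio (-crit x / (2 * x ^ 4)) x := by
  have hnum : HasDerivAt (fun y ↦ cos y - 1 + y ^ 2 / 2) (-sin x + x) x :=
    (((hasDerivAt_cos x).sub_const 1).add ((hasDerivAt_pow 2 x).div_const 2)).congr_deriv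
      (by ring)
  refine (hnum.div (hasDerivAt_pow 3 x) (pow_ne_zero 3 hx)).congr_deriv ?_
  rw [crit]
  field_simp
  ring

theorem continuous_crit : Continuous crit := by
  unfold crit
  fun_prop

theorem crit_pos_of_five_le {x : ℝ} (hx : 5 ≤ x) : 0 < crit x := by
  unfold crit
  nlinarith [neg_one_le_sin x, neg_one_le_cos x]

theorem ratio_eq_of_crit_eq_zero {x : ℝ} (hx : x ≠ 0) (h : crit x = 0) :
    ratio x = (x - sin x) / (3 * x ^ 2) := by
  rw [crit] at h
  rw [ratio, div_eq_div_iff (by positivity) (by positivity)]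
  linear_combination (x ^ 2 / 2) * h

theorem sin_cos_near_root_left : sin 3.995895 ∈ Icc (-0.75411292) (-0.754112915) ∧
    cos 3.995895 ∈ Icc (-0.656744780) (-0.656744765) := by
  obtain ⟨hs, hc⟩ := sin_cos_four_mul_mem_Icc (y := 3.995895 / 4)
    (by norm_num [Finset.sum_range_succ, Nat.factorial])
    (by norm_num [Finset.sum_range_succ, Nat.factorial])
    (by norm_num [Finset.sum_range_succ, Nat.factorial])
    (sin_mem_Icc_taylor (by norm_num) (by norm_num) 3) (cos_mem_Icc_taylor (by norm_num) 3)
  rw [mul_div_cancel₀ _ four_ne_zero] at hs hc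
  refine ⟨Icc_subset_Icc ?_ ?_ hs, Icc_subset_Icc ?_ ?_ hc⟩ <;>
    norm_num [Finset.sum_range_succ, Nat.factorial]

theorem sin_cos_near_root_right : sin 3.995896 ∈ Icc (-0.754113577) (-0.754113572) ∧
    cos 3.995896 ∈ Icc (-0.656744026) (-0.656744011) := by
  obtain ⟨hs, hc⟩ := sin_cos_four_mul_mem_Icc (y := 3.995896 / 4)
    (by norm_num [Finset.sum_range_succ, Nat.factorial])
    (by norm_num [Finset.sum_range_succ, Nat.factorial])
    (by norm_num [Finset.sum_range_succ, Nat.factorial])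
    (sin_mem_Icc_taylor (by norm_num) (by norm_num) 3) (cos_mem_Icc_taylor (by norm_num) 3)
  rw [mul_div_cancel₀ _ four_ne_zero] at hs hc
  refine ⟨Icc_subset_Icc ?_ ?_ hs, Icc_subset_Icc ?_ ?_ hc⟩ <;>
    norm_num [Finset.sum_range_succ, Nat.factorial]

theorem crit_near_root_left_neg : crit 3.995895 < 0 := by
  obtain ⟨hs, hc⟩ := sin_cos_near_root_left
  unfold crit
  linarith [hs.2, hc.2]

theorem crit_near_root_right_pos : 0 < crit 3.995896 := by
  obtain ⟨hs, hc⟩ := sin_cos_near_root_right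
  unfold crit
  linarith [hs.1, hc.1]

theorem lt_ratio_near_root_left : 0.099161 < ratio 3.995895 := by
  rw [ratio, lt_div_iff₀ (by norm_num)]
  linarith [sin_cos_near_root_left.2.1]

theorem ratio_lt_of_mem_Ioo {θ : ℝ} (hθ : θ ∈ Ioo 3.995895 3.995896) : ratio θ < 0.099162 := by
  have hcos : cos θ ≤ cos 3.995896 := by
    rw [← cos_two_pi_sub θ, ← cos_two_pi_sub 3.995896]
    exact cos_le_cos_of_nonneg_of_le_pi (by linarith [pi_gt_three]) (by linarith [pi_lt_d2, hθ.1])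
      (by linarith [hθ.2])
  have ht : 0 ≤ θ - 3.995895 := by linarith [hθ.1]
  rw [ratio, div_lt_iff₀ (pow_pos (by linarith [hθ.1]) 3)]
  -- in powers of `θ - 3.995895`, `0.099162 θ ^ 3 - θ ^ 2 / 2` has only positive coefficients
  nlinarith [sin_cos_near_root_right.2.2, mul_nonneg ht ht, mul_nonneg (mul_nonneg ht ht) ht]

theorem mem_Ioo_of_unique_zero {θ : ℝ} (huniq : ∀ x ∈ Ioo 0 (2 * π), crit x = 0 → x = θ) :
    θ ∈ Ioo 3.995895 3.995896 := by
  obtain ⟨z, hz, hz0⟩ := intermediate_value_Ioo (by norm_num) continuous_crit.continuousOn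
    ⟨crit_near_root_left_neg, crit_near_root_right_pos⟩
  rw [← huniq z ⟨by linarith [hz.1], by linarith [hz.2, pi_gt_three]⟩ hz0]
  exact hz

theorem crit_neg_of_mem_Ioo {θ : ℝ} (huniq : ∀ x ∈ Ioo 0 (2 * π), crit x = 0 → x = θ)
    {x : ℝ} (hx : x ∈ Ioo 0 θ) : crit x < 0 := by
  have hθ := mem_Ioo_of_unique_zero huniq
  refine isPreconnected_Ioo.neg_of_forall_ne_zero continuous_crit.continuousOn
    (fun y hy h0 ↦ ?_) ⟨by norm_num, hθ.1⟩ crit_near_root_left_neg hx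
  exact hy.2.ne (huniq y ⟨hy.1, by linarith [hy.2, hθ.2, pi_gt_three]⟩ h0)

theorem crit_pos_of_lt {θ : ℝ} (huniq : ∀ x ∈ Ioo 0 (2 * π), crit x = 0 → x = θ)
    {x : ℝ} (hx : θ < x) : 0 < crit x := by
  have hθ := mem_Ioo_of_unique_zero huniq
  refine isPreconnected_Ioi.pos_of_forall_ne_zero continuous_crit.continuousOn
    (fun y (hy : θ < y) h0 ↦ ?_) hθ.2 crit_near_root_right_pos hx
  rcases lt_or_ge y (2 * π) with hy2π | hy2π
  · exact hy.ne' (huniq y ⟨by linarith [hθ.1], hy2π⟩ h0)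
  · exact (crit_pos_of_five_le (by linarith [pi_gt_three])).ne' h0

theorem isMaxOn_ratio {θ : ℝ} (huniq : ∀ x ∈ Ioo 0 (2 * π), crit x = 0 → x = θ) :
    IsMaxOn ratio (Ioi 0) θ := by
  have hθ := mem_Ioo_of_unique_zero huniq
  refine isMaxOn_of_hasDerivAt (by linarith [hθ.1]) (fun x hx ↦ hasDerivAt_ratio hx.ne')
    (fun x hx ↦ div_nonneg (neg_nonneg.2 (crit_neg_of_mem_Ioo huniq hx).le) (by positivity))
    (fun x hx ↦ div_nonpos_of_nonpos_of_nonneg (neg_nonpos.2 (crit_pos_of_lt huniq hx).le)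
      (by positivity))

end Kappa3

theorem kappa3_value (θ : ℝ) (hθ : θ ∈ Set.Ioo 0 (2 * Real.pi))
    (heq : θ ^ 2 + 2 * θ * Real.sin θ + 6 * (Real.cos θ - 1) = 0)
    (huniq : ∀ x ∈ Set.Ioo 0 (2 * Real.pi),
      x ^ 2 + 2 * x * Real.sin x + 6 * (Real.cos x - 1) = 0 → x = θ) :
    sSup {y : ℝ | ∃ x : ℝ, 0 < x ∧ y = (Real.cos x - 1 + x ^ 2 / 2) / x ^ 3} =
      (Real.cos θ - 1 + θ ^ 2 / 2) / θ ^ 3 ∧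
    (Real.cos θ - 1 + θ ^ 2 / 2) / θ ^ 3 = (θ - Real.sin θ) / (3 * θ ^ 2) ∧
    0.099161 < (Real.cos θ - 1 + θ ^ 2 / 2) / θ ^ 3 ∧
    (Real.cos θ - 1 + θ ^ 2 / 2) / θ ^ 3 < 0.099162 := by
  have hmax : ∀ x ∈ Ioi 0, Kappa3.ratio x ≤ Kappa3.ratio θ :=
    isMaxOn_iff.1 (Kappa3.isMaxOn_ratio huniq)
  have hgreatest : IsGreatest {y | ∃ x, 0 < x ∧ y = Kappa3.ratio x} (Kappa3.ratio θ) :=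
    ⟨⟨θ, hθ.1, rfl⟩, by rintro _ ⟨x, hx, rfl⟩; exact hmax x hx⟩
  exact ⟨hgreatest.csSup_eq, Kappa3.ratio_eq_of_crit_eq_zero hθ.1.ne' heq,
    Kappa3.lt_ratio_near_root_left.trans_le (hmax _ (by norm_num)),
    Kappa3.ratio_lt_of_mem_Ioo (Kappa3.mem_Ioo_of_unique_zero huniq)⟩
end

section
/- The equation x² + 2x·sin x + 6(cos x − 1) = 0 has exactly one root in the open interval (0, 2π). -/
/-!
Write `f x = x² + 2x sin x + 6(cos x - 1)`, so `f 0 = 0`, `f π = π² - 12 < 0` and `f (2π) = 4π² > 0`.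
Its derivative factors through the half angle as `4 cos(x/2) (x cos(x/2) - 2 sin(x/2))`, which is
negative on `(0, π)` because `tan t > t` for `0 < t < π/2`, and `2x(1 + cos x) - 4 sin x` is positive on
`(π, 2π)` where `sin x < 0`. So `f` decreases from `0` on `[0, π]` and increases through a single
zero on `[π, 2π]`.
-/

open Real Set

noncomputable def thetaFun (x : ℝ) : ℝ :=
  x ^ 2 + 2 * x * sin x + 6 * (cos x - 1)

lemma continuous_thetaFun : Continuous thetaFun := by
  unfold thetaFun; fun_prop

lemma hasDerivAt_thetaFun (x : ℝ) :
    HasDerivAt thetaFun (2 * x * (1 + cos x) - 4 * sin x) x := by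
  have h := (((hasDerivAt_pow 2 x).add
    (((hasDerivAt_id x).const_mul 2).mul (hasDerivAt_sin x))).add
    (((hasDerivAt_cos x).sub_const 1).const_mul 6))
  exact h.congr_deriv (by simp only [id]; ring)

lemma deriv_thetaFun_eq_half_angle (x : ℝ) :
    2 * x * (1 + cos x) - 4 * sin x = 4 * cos (x / 2) * (x * cos (x / 2) - 2 * sin (x / 2)) := by
  have hcos : cos x = 2 * cos (x / 2) ^ 2 - 1 := by
    rw [← cos_two_mul, mul_div_cancel₀ x two_ne_zero]
  have hsin : sin x = 2 * sin (x / 2) * cos (x / 2) := by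
    rw [← sin_two_mul, mul_div_cancel₀ x two_ne_zero]
  rw [hcos, hsin]
  ring

lemma mul_cos_lt_sin {t : ℝ} (h0 : 0 < t) (h1 : t < π / 2) : t * cos t < sin t := by
  have hcos : 0 < cos t := cos_pos_of_mem_Ioo ⟨by linarith, h1⟩
  have htan := lt_tan h0 h1
  rwa [tan_eq_sin_div_cos, lt_div_iff₀ hcos] at htan

lemma strictAntiOn_thetaFun : StrictAntiOn thetaFun (Icc 0 π) := by
  refine strictAntiOn_of_deriv_neg (convex_Icc _ _) continuous_thetaFun.continuousOn ?_
  rw [interior_Icc]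
  rintro x ⟨hx0, hxπ⟩
  rw [(hasDerivAt_thetaFun x).deriv, deriv_thetaFun_eq_half_angle]
  have hcos : 0 < cos (x / 2) := cos_pos_of_mem_Ioo ⟨by linarith [pi_pos], by linarith⟩
  have hkey := mul_cos_lt_sin (t := x / 2) (by linarith) (by linarith)
  nlinarith

lemma strictMonoOn_thetaFun : StrictMonoOn thetaFun (Icc π (2 * π)) := by
  refine strictMonoOn_of_deriv_pos (convex_Icc _ _) continuous_thetaFun.continuousOn ?_
  rw [interior_Icc]
  rintro x ⟨hπx, hx2π⟩
  rw [(hasDerivAt_thetaFun x).deriv]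
  have hsin : sin x < 0 := by
    simpa only [sin_sub_two_pi] using
      sin_neg_of_neg_of_neg_pi_lt (x := x - 2 * π) (by linarith) (by linarith)
  have hx : 0 < x := pi_pos.trans hπx
  nlinarith [neg_one_le_cos x]

lemma thetaFun_neg_of_mem_Ioc {x : ℝ} (hx : x ∈ Ioc 0 π) : thetaFun x < 0 := by
  have h := strictAntiOn_thetaFun ⟨le_rfl, pi_pos.le⟩ (Ioc_subset_Icc_self hx) hx.1
  simpa [thetaFun] using h

lemma thetaFun_two_pi_pos : 0 < thetaFun (2 * π) := by
  simp only [thetaFun, sin_two_pi, cos_two_pi]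
  nlinarith [pi_pos]

theorem unique_root_theta3 :
    ∃! x : ℝ, x ∈ Set.Ioo 0 (2 * Real.pi) ∧
      x ^ 2 + 2 * x * Real.sin x + 6 * (Real.cos x - 1) = 0 := by
  have hπ := pi_pos
  obtain ⟨c, hc, hfc⟩ := intermediate_value_Ioo (by linarith : π ≤ 2 * π)
    continuous_thetaFun.continuousOn
    ⟨thetaFun_neg_of_mem_Ioc ⟨hπ, le_rfl⟩, thetaFun_two_pi_pos⟩
  refine ⟨c, ⟨⟨hπ.trans hc.1, hc.2⟩, hfc⟩, ?_⟩
  rintro y ⟨⟨hy0, hy2π⟩, hfy⟩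
  have hπy : π < y := by
    by_contra! hyπ
    exact (thetaFun_neg_of_mem_Ioc ⟨hy0, hyπ⟩).ne hfy
  exact strictMonoOn_thetaFun.injOn ⟨hπy.le, hy2π.le⟩ ⟨hc.1.le, hc.2.le⟩ (hfy.trans hfc.symm)
end

section
/- Let θ₁* be the unique root in (0, π) of x·sin x + cos x − 1 = 0. Then sup_{x>0} (1 − cos x)/x = (1 − cos θ₁*)/θ₁* = sin θ₁*, and this value κ₁ satisfies 0.724611 < κ₁ < 0.724612. -/
open Real Finset Nat

private lemma sin_series_bounds (x : ℝ) (hx : 0 ≤ x) (hx2 : x ^ 2 ≤ 42) (k : ℕ) :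
    x - x ^ 3 / 6 + ∑ i ∈ range (2 * k), (-1 : ℝ) ^ i * (x ^ (2 * i + 5) / (2 * i + 5)!) ≤
      Real.sin x ∧
    Real.sin x ≤
      x - x ^ 3 / 6 + ∑ i ∈ range (2 * k + 1), (-1 : ℝ) ^ i * (x ^ (2 * i + 5) / (2 * i + 5)!) := by
  set g : ℕ → ℝ := fun i => x ^ (2 * i + 5) / (2 * i + 5)! with hg
  have key : HasSum (fun n => (-1 : ℝ) ^ n * g n) (Real.sin x - (x - x ^ 3 / 6)) := by
    have e1 : ∑ i ∈ range 2, (-1 : ℝ) ^ i * x ^ (2 * i + 1) / (2 * i + 1)! = x - x ^ 3 / 6 := by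
      rw [Finset.sum_range_succ, Finset.sum_range_one]
      norm_num [Nat.factorial]
      ring
    have h2 : HasSum (fun n : ℕ => (-1 : ℝ) ^ (n + 2) * x ^ (2 * (n + 2) + 1) / (2 * (n + 2) + 1)!)
        (Real.sin x - ∑ i ∈ range 2, (-1 : ℝ) ^ i * x ^ (2 * i + 1) / (2 * i + 1)!) :=
      (hasSum_nat_add_iff' (f := fun n : ℕ => (-1 : ℝ) ^ n * x ^ (2 * n + 1) / (2 * n + 1)!) 2).mpr
        (Real.hasSum_sin x)
    rw [e1] at h2
    convert h2 using 2 with n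
    have e2 : 2 * (n + 2) + 1 = 2 * n + 5 := by ring
    rw [e2, hg]
    simp only
    rw [pow_add]
    ring
  have hfl := key.tendsto_sum_nat
  have hfa : Antitone g := by
    apply antitone_nat_of_succ_le
    intro n
    have e1 : x ^ (2 * (n + 1) + 5) = x ^ (2 * n + 5) * x ^ 2 := by ring
    have e2 : ((2 * (n + 1) + 5)! : ℝ) = (2 * n + 5)! * ((2 * n + 6) * (2 * n + 7)) := by
      have e : (2 * (n + 1) + 5)! = (2 * n + 5)! * ((2 * n + 6) * (2 * n + 7)) := by
        rw [show 2 * (n + 1) + 5 = (2 * n + 6) + 1 from by ring, Nat.factorial_succ,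
          show 2 * n + 6 = (2 * n + 5) + 1 from by ring, Nat.factorial_succ]
        ring
      rw [e]
      push_cast
      ring
    calc g (n + 1) = (x ^ (2 * n + 5) / (2 * n + 5)!) * (x ^ 2 / ((2 * n + 6) * (2 * n + 7))) := by
          rw [hg]
          simp only
          rw [e1, e2]
          exact (div_mul_div_comm _ _ _ _).symm
      _ ≤ (x ^ (2 * n + 5) / (2 * n + 5)!) * 1 := by
          apply mul_le_mul_of_nonneg_left _ (by positivity)
          rw [div_le_one (by positivity)]
          have hn : (0 : ℝ) ≤ (n : ℝ) := Nat.cast_nonneg n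
          nlinarith
      _ = g n := by rw [mul_one]
  constructor
  · have := hfa.alternating_series_le_tendsto hfl k
    linarith
  · have := hfa.tendsto_le_alternating_series hfl k
    linarith

private lemma cos_series_bounds (x : ℝ) (hx : 0 ≤ x) (hx2 : x ^ 2 ≤ 30) (k : ℕ) :
    1 - x ^ 2 / 2 + ∑ i ∈ range (2 * k), (-1 : ℝ) ^ i * (x ^ (2 * i + 4) / (2 * i + 4)!) ≤
      Real.cos x ∧
    Real.cos x ≤
      1 - x ^ 2 / 2 + ∑ i ∈ range (2 * k + 1), (-1 : ℝ) ^ i * (x ^ (2 * i + 4) / (2 * i + 4)!) := by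
  set g : ℕ → ℝ := fun i => x ^ (2 * i + 4) / (2 * i + 4)! with hg
  have key : HasSum (fun n => (-1 : ℝ) ^ n * g n) (Real.cos x - (1 - x ^ 2 / 2)) := by
    have e1 : ∑ i ∈ range 2, (-1 : ℝ) ^ i * x ^ (2 * i) / (2 * i)! = 1 - x ^ 2 / 2 := by
      rw [Finset.sum_range_succ, Finset.sum_range_one]
      norm_num [Nat.factorial]
      ring
    have h2 : HasSum (fun n : ℕ => (-1 : ℝ) ^ (n + 2) * x ^ (2 * (n + 2)) / (2 * (n + 2))!)
        (Real.cos x - ∑ i ∈ range 2, (-1 : ℝ) ^ i * x ^ (2 * i) / (2 * i)!) :=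
      (hasSum_nat_add_iff' (f := fun n : ℕ => (-1 : ℝ) ^ n * x ^ (2 * n) / (2 * n)!) 2).mpr
        (Real.hasSum_cos x)
    rw [e1] at h2
    convert h2 using 2 with n
    have e2 : 2 * (n + 2) = 2 * n + 4 := by ring
    rw [e2, hg]
    simp only
    rw [pow_add]
    ring
  have hfl := key.tendsto_sum_nat
  have hfa : Antitone g := by
    apply antitone_nat_of_succ_le
    intro n
    have e1 : x ^ (2 * (n + 1) + 4) = x ^ (2 * n + 4) * x ^ 2 := by ring
    have e2 : ((2 * (n + 1) + 4)! : ℝ) = (2 * n + 4)! * ((2 * n + 5) * (2 * n + 6)) := by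
      have e : (2 * (n + 1) + 4)! = (2 * n + 4)! * ((2 * n + 5) * (2 * n + 6)) := by
        rw [show 2 * (n + 1) + 4 = (2 * n + 5) + 1 from by ring, Nat.factorial_succ,
          show 2 * n + 5 = (2 * n + 4) + 1 from by ring, Nat.factorial_succ]
        ring
      rw [e]
      push_cast
      ring
    calc g (n + 1) = (x ^ (2 * n + 4) / (2 * n + 4)!) * (x ^ 2 / ((2 * n + 5) * (2 * n + 6))) := by
          rw [hg]
          simp only
          rw [e1, e2]
          exact (div_mul_div_comm _ _ _ _).symm
      _ ≤ (x ^ (2 * n + 4) / (2 * n + 4)!) * 1 := by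
          apply mul_le_mul_of_nonneg_left _ (by positivity)
          rw [div_le_one (by positivity)]
          have hn : (0 : ℝ) ≤ (n : ℝ) := Nat.cast_nonneg n
          nlinarith
      _ = g n := by rw [mul_one]
  constructor
  · have := hfa.alternating_series_le_tendsto hfl k
    linarith
  · have := hfa.tendsto_le_alternating_series hfl k
    linarith

private lemma sin_a_lb : (0.7246114023 : ℝ) ≤ Real.sin 2.3311223 := by
  have h := (sin_series_bounds 2.3311223 (by norm_num) (by norm_num) 5).1
  refine le_trans ?_ h
  simp only [Finset.sum_range_succ, Finset.sum_range_zero]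
  norm_num [Nat.factorial]

private lemma sin_a_ub : Real.sin 2.3311223 ≤ (0.7246114024 : ℝ) := by
  have h := (sin_series_bounds 2.3311223 (by norm_num) (by norm_num) 5).2
  refine le_trans h ?_
  simp only [Finset.sum_range_succ, Finset.sum_range_zero]
  norm_num [Nat.factorial]

private lemma cos_a_lb : (-0.6891576857 : ℝ) ≤ Real.cos 2.3311223 := by
  have h := (cos_series_bounds 2.3311223 (by norm_num) (by norm_num) 5).1
  refine le_trans ?_ h
  simp only [Finset.sum_range_succ, Finset.sum_range_zero]
  norm_num [Nat.factorial]

private lemma sin_b_lb : (0.7246113333 : ℝ) ≤ Real.sin 2.3311224 := by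
  have h := (sin_series_bounds 2.3311224 (by norm_num) (by norm_num) 5).1
  refine le_trans ?_ h
  simp only [Finset.sum_range_succ, Finset.sum_range_zero]
  norm_num [Nat.factorial]

private lemma sin_b_ub : Real.sin 2.3311224 ≤ (0.7246113334 : ℝ) := by
  have h := (sin_series_bounds 2.3311224 (by norm_num) (by norm_num) 5).2
  refine le_trans h ?_
  simp only [Finset.sum_range_succ, Finset.sum_range_zero]
  norm_num [Nat.factorial]

private lemma cos_b_ub : Real.cos 2.3311224 ≤ (-0.6891577580 : ℝ) := by
  have h := (cos_series_bounds 2.3311224 (by norm_num) (by norm_num) 5).2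
  refine le_trans h ?_
  simp only [Finset.sum_range_succ, Finset.sum_range_zero]
  norm_num [Nat.factorial]

private lemma G_one_pos : 0 < 1 * Real.sin 1 + Real.cos 1 - 1 := by
  have h1 := (sin_series_bounds 1 (by norm_num) (by norm_num) 2).1
  have h2 := (cos_series_bounds 1 (by norm_num) (by norm_num) 2).1
  simp only [Finset.sum_range_succ, Finset.sum_range_zero] at h1 h2
  norm_num [Nat.factorial] at h1 h2
  nlinarith

private lemma G_three_neg : 3 * Real.sin 3 + Real.cos 3 - 1 < 0 := by
  have h1 := (sin_series_bounds 3 (by norm_num) (by norm_num) 3).2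
  have h2 := (cos_series_bounds 3 (by norm_num) (by norm_num) 3).2
  simp only [Finset.sum_range_succ, Finset.sum_range_zero] at h1 h2
  norm_num [Nat.factorial] at h1 h2
  nlinarith

private lemma G_a_pos : 0 < 2.3311223 * Real.sin 2.3311223 + Real.cos 2.3311223 - 1 := by
  nlinarith [sin_a_lb, cos_a_lb]

private lemma G_b_neg : 2.3311224 * Real.sin 2.3311224 + Real.cos 2.3311224 - 1 < 0 := by
  nlinarith [sin_b_ub, cos_b_ub]

theorem kappa1_value (θ : ℝ) (hθ : θ ∈ Set.Ioo 0 Real.pi)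
    (heq : θ * Real.sin θ + Real.cos θ - 1 = 0)
    (huniq : ∀ x ∈ Set.Ioo 0 Real.pi,
      x * Real.sin x + Real.cos x - 1 = 0 → x = θ) :
    sSup {y : ℝ | ∃ x : ℝ, 0 < x ∧ y = (1 - Real.cos x) / x} = (1 - Real.cos θ) / θ ∧
    (1 - Real.cos θ) / θ = Real.sin θ ∧
    0.724611 < (1 - Real.cos θ) / θ ∧ (1 - Real.cos θ) / θ < 0.724612 := by
  obtain ⟨hθ0, hθπ⟩ := hθ
  have hπ2 : (3.1415 : ℝ) < Real.pi := Real.pi_gt_d4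
  have hπ4 : Real.pi < 4 := Real.pi_lt_four
  have hπpos : (0 : ℝ) < Real.pi := Real.pi_pos
  have hre : (1 - Real.cos θ) / θ = Real.sin θ := by
    rw [div_eq_iff (ne_of_gt hθ0)]
    linarith
  have hGc : Continuous (fun x : ℝ => x * Real.sin x + Real.cos x - 1) :=
    ((continuous_id.mul Real.continuous_sin).add Real.continuous_cos).sub continuous_const
  have hθab : 2.3311223 < θ ∧ θ < 2.3311224 := by
    have hsub := intermediate_value_Ioo' (a := (2.3311223 : ℝ)) (b := (2.3311224 : ℝ))
      (by norm_num) hGc.continuousOn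
    obtain ⟨c, hc, hc0⟩ := hsub (Set.mem_Ioo.mpr ⟨G_b_neg, G_a_pos⟩)
    have hcθ : c = θ := huniq c ⟨by linarith [hc.1], by linarith [hc.2]⟩ hc0
    rw [hcθ] at hc
    exact ⟨hc.1, hc.2⟩
  obtain ⟨ha, hb⟩ := hθab
  have hsin_eq : ∀ y : ℝ, Real.sin y = Real.cos (y - Real.pi / 2) := by
    intro y
    rw [← Real.cos_pi_div_two_sub y, ← Real.cos_neg (y - Real.pi / 2)]
    ring_nf
  have hsθ_lt : Real.sin θ < Real.sin 2.3311223 := by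
    rw [hsin_eq θ, hsin_eq 2.3311223]
    apply Real.cos_lt_cos_of_nonneg_of_le_pi
    · linarith
    · linarith
    · linarith
  have hsθ_gt : Real.sin 2.3311224 < Real.sin θ := by
    rw [hsin_eq θ, hsin_eq 2.3311224]
    apply Real.cos_lt_cos_of_nonneg_of_le_pi
    · linarith
    · linarith
    · linarith
  have hlb : (0.724611 : ℝ) < Real.sin θ := by
    have := sin_b_lb
    linarith
  have hub : Real.sin θ < (0.724612 : ℝ) := by
    have := sin_a_ub
    linarith
  have claim1 : ∀ x : ℝ, 0 < x → x < θ → 0 < x * Real.sin x + Real.cos x - 1 := by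
    intro x hx0 hxθ
    by_contra hcon
    push_neg at hcon
    rcases lt_or_eq_of_le hcon with hlt | heq0
    · rcases lt_trichotomy x 1 with h1 | h1 | h1
      · have hsub := intermediate_value_Ioo (a := x) (b := (1 : ℝ)) (le_of_lt h1)
          hGc.continuousOn
        obtain ⟨c, hc, hc0⟩ := hsub (Set.mem_Ioo.mpr ⟨hlt, G_one_pos⟩)
        have hcθ : c = θ := huniq c ⟨by linarith [hc.1], by linarith [hc.2]⟩ hc0
        linarith [hc.2]
      · rw [h1] at hlt
        linarith [G_one_pos]
      · have hsub := intermediate_value_Ioo' (a := (1 : ℝ)) (b := x) (le_of_lt h1)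
          hGc.continuousOn
        obtain ⟨c, hc, hc0⟩ := hsub (Set.mem_Ioo.mpr ⟨hlt, G_one_pos⟩)
        have hcθ : c = θ := huniq c ⟨by linarith [hc.1], by linarith [hc.2]⟩ hc0
        linarith [hc.2]
    · exact absurd (huniq x ⟨hx0, by linarith⟩ heq0) (ne_of_lt hxθ)
  have claim2 : ∀ x : ℝ, θ < x → x < Real.pi → x * Real.sin x + Real.cos x - 1 < 0 := by
    intro x hxθ hxπ
    by_contra hcon
    push_neg at hcon
    rcases lt_or_eq_of_le hcon with hlt | heq0
    · rcases lt_trichotomy x 3 with h1 | h1 | h1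
      · have hsub := intermediate_value_Ioo' (a := x) (b := (3 : ℝ)) (le_of_lt h1)
          hGc.continuousOn
        obtain ⟨c, hc, hc0⟩ := hsub (Set.mem_Ioo.mpr ⟨G_three_neg, hlt⟩)
        have hcθ : c = θ := huniq c ⟨by linarith [hc.1], by linarith [hc.2]⟩ hc0
        linarith [hc.1]
      · rw [h1] at hlt
        linarith [G_three_neg]
      · have hsub := intermediate_value_Ioo (a := (3 : ℝ)) (b := x) (le_of_lt h1)
          hGc.continuousOn
        obtain ⟨c, hc, hc0⟩ := hsub (Set.mem_Ioo.mpr ⟨G_three_neg, hlt⟩)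
        have hcθ : c = θ := huniq c ⟨by linarith [hc.1], by linarith [hc.2]⟩ hc0
        linarith [hc.1]
    · exact absurd (huniq x ⟨by linarith, hxπ⟩ heq0.symm) (ne_of_gt hxθ)
  set h : ℝ → ℝ := fun x => (1 - Real.cos x) / x with hh
  have hderiv : ∀ x : ℝ, x ≠ 0 →
      HasDerivAt h ((Real.sin x * x - (1 - Real.cos x) * 1) / x ^ 2) x := by
    intro x hx
    have h1 : HasDerivAt (fun y : ℝ => 1 - Real.cos y) (Real.sin x) x := by
      simpa using (Real.hasDerivAt_cos x).const_sub 1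
    exact h1.div (hasDerivAt_id x) hx
  have hcont : ∀ s : Set ℝ, (∀ x ∈ s, x ≠ 0) → ContinuousOn h s := by
    intro s hs
    exact ContinuousOn.div (by fun_prop) continuousOn_id hs
  have hmono : StrictMonoOn h (Set.Ioc 0 θ) := by
    apply strictMonoOn_of_deriv_pos (convex_Ioc 0 θ)
    · exact hcont _ (fun x hx => ne_of_gt hx.1)
    · intro x hx
      rw [interior_Ioc] at hx
      rw [(hderiv x (ne_of_gt hx.1)).deriv]
      have hG := claim1 x hx.1 hx.2
      have hx2 : (0 : ℝ) < x ^ 2 := pow_pos hx.1 2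
      apply div_pos _ hx2
      nlinarith
  have hanti : StrictAntiOn h (Set.Icc θ Real.pi) := by
    apply strictAntiOn_of_deriv_neg (convex_Icc θ Real.pi)
    · exact hcont _ (fun x hx => ne_of_gt (lt_of_lt_of_le hθ0 hx.1))
    · intro x hx
      rw [interior_Icc] at hx
      rw [(hderiv x (ne_of_gt (lt_trans hθ0 hx.1))).deriv]
      have hG := claim2 x hx.1 hx.2
      have hx2 : (0 : ℝ) < x ^ 2 := pow_pos (lt_trans hθ0 hx.1) 2
      apply div_neg_of_neg_of_pos _ hx2
      nlinarith
  have hmax : ∀ x : ℝ, 0 < x → h x ≤ h θ := by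
    intro x hx0
    rcases le_or_gt Real.pi x with hxπ | hxπ
    · have hcx := Real.neg_one_le_cos x
      have h1 : h x ≤ 2 / x := by
        show (1 - Real.cos x) / x ≤ 2 / x
        rw [div_le_div_iff₀ hx0 hx0]
        nlinarith
      have h2 : (2 : ℝ) / x ≤ 2 / Real.pi := by
        rw [div_le_div_iff₀ hx0 hπpos]
        linarith
      have h3 : (2 : ℝ) / Real.pi < Real.sin θ := by
        rw [div_lt_iff₀ hπpos]
        nlinarith
      have h4 : h θ = Real.sin θ := hre
      linarith
    · rcases le_or_gt x θ with hxθ | hxθ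
      · rcases eq_or_lt_of_le hxθ with rfl | hlt
        · exact le_rfl
        · exact le_of_lt (hmono ⟨hx0, hxθ⟩ ⟨hθ0, le_refl θ⟩ hlt)
      · exact le_of_lt (hanti ⟨le_refl θ, le_of_lt hθπ⟩ ⟨le_of_lt hxθ, le_of_lt hxπ⟩ hxθ)
  have hgreat : IsGreatest {y : ℝ | ∃ x : ℝ, 0 < x ∧ y = (1 - Real.cos x) / x}
      ((1 - Real.cos θ) / θ) := by
    constructor
    · exact ⟨θ, hθ0, rfl⟩
    · rintro y ⟨x, hx0, rfl⟩
      exact hmax x hx0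
  refine ⟨hgreat.csSup_eq, hre, ?_, ?_⟩
  · rw [hre]; exact hlb
  · rw [hre]; exact hub
end

section
/- For all x > 0, (x − sin x)/x² ≤ 1/π, with equality at x = π; equivalently, sup_{x>0} 2(x − sin x)/x² = 2/π. -/
/-!
The claim is `π (x - sin x) ≤ x²`. For `x ≥ π` it follows from `sin x ≥ π - x` and
`(x - π)² ≥ 0`. On `[0, π]` it says that `sin` lies above the parabola `x (π - x) / π`, which has
the same zeros; both are symmetric about `π / 2`, and on `[0, π / 2]` the cubic Taylor bound
`sin x ≥ x - x³ / 6` already suffices because `π x ≤ π² / 2 ≤ 6` there.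
Equality holds at `x = π`, so `2 / π` is the greatest value of `2 (x - sin x) / x²`.
-/

open Real

lemma mul_pi_sub_le_pi_mul_sin_of_le_pi_div_two {x : ℝ} (hx₀ : 0 ≤ x) (hx : x ≤ π / 2) :
    x * (π - x) ≤ π * sin x := by
  have hsin := sin_ge_sub_cube hx₀
  have hpi := pi_lt_d2
  have hpi_x : π * x ≤ 6 := by nlinarith [pi_pos]
  nlinarith [pow_two_nonneg x]

lemma mul_pi_sub_le_pi_mul_sin {x : ℝ} (hx₀ : 0 ≤ x) (hx : x ≤ π) :
    x * (π - x) ≤ π * sin x := by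
  rcases le_total x (π / 2) with hle | hge
  · exact mul_pi_sub_le_pi_mul_sin_of_le_pi_div_two hx₀ hle
  · have := mul_pi_sub_le_pi_mul_sin_of_le_pi_div_two (x := π - x) (by linarith) (by linarith)
    rwa [sin_pi_sub, sub_sub_cancel, mul_comm] at this

lemma pi_sub_le_sin_of_pi_le {x : ℝ} (hx : π ≤ x) : π - x ≤ sin x := by
  have := sin_le (sub_nonneg.mpr hx)
  rw [sin_sub_pi] at this
  linarith

lemma pi_mul_sub_sin_le_sq {x : ℝ} (hx : 0 ≤ x) : π * (x - sin x) ≤ x ^ 2 := by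
  rcases le_total x π with hle | hge
  · nlinarith [mul_pi_sub_le_pi_mul_sin hx hle]
  · have hsin := mul_le_mul_of_nonneg_left (pi_sub_le_sin_of_pi_le hge) pi_pos.le
    nlinarith [sq_nonneg (x - π)]

lemma sub_sin_div_sq_le_inv_pi {x : ℝ} (hx : 0 < x) : (x - sin x) / x ^ 2 ≤ 1 / π := by
  rw [div_le_div_iff₀ (by positivity) pi_pos, one_mul, mul_comm]
  exact pi_mul_sub_sin_le_sq hx.le

lemma pi_sub_sin_pi_div_sq : (π - sin π) / π ^ 2 = 1 / π := by
  rw [sin_pi, sub_zero]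
  field_simp

theorem sup_x_minus_sin_over_sq :
    (∀ x : ℝ, 0 < x → (x - Real.sin x) / x ^ 2 ≤ 1 / Real.pi) ∧
    (Real.pi - Real.sin Real.pi) / Real.pi ^ 2 = 1 / Real.pi ∧
    sSup {y : ℝ | ∃ x : ℝ, 0 < x ∧ y = 2 * (x - Real.sin x) / x ^ 2} = 2 / Real.pi := by
  refine ⟨fun x hx ↦ sub_sin_div_sq_le_inv_pi hx, pi_sub_sin_pi_div_sq, ?_⟩
  have hassoc (x : ℝ) : 2 * (x - sin x) / x ^ 2 = 2 * ((x - sin x) / x ^ 2) := mul_div_assoc ..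
  refine IsGreatest.csSup_eq ⟨⟨π, pi_pos, ?_⟩, ?_⟩
  · rw [hassoc, pi_sub_sin_pi_div_sq, mul_one_div]
  · rintro y ⟨x, hx, rfl⟩
    rw [hassoc, div_eq_mul_one_div 2 π]
    exact mul_le_mul_of_nonneg_left (sub_sin_div_sq_le_inv_pi hx) zero_le_two
end

section
/- Let X be a random variable with E X = 0, E X² = 1, E|X|³ = b where b ≥ 1. Then |E X³| ≤ A(b)·E|X|³, where A(b) = sqrt( (1/2)·sqrt(1 + 8/b²) + 1/2 − 2/b² ). -/
/-!
Write `X = X⁺ - X⁻`, `c = E X⁺ = E X⁻`, `aₖ = E (X⁺)ᵏ` and `bₖ = E (X⁻)ᵏ`, so that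
`a₂ + b₂ = 1`, `a₃ + b₃ = b` and `E X³ = a₃ - b₃`. Cauchy–Schwarz gives `a₂² ≤ c a₃` and
`b₂² ≤ c b₃`; applied on the complementary events `{X > 0}` and `{X ≤ 0}` it gives
`c² ≤ P(X > 0) a₂` and `c² ≤ P(X ≤ 0) b₂`, hence `c² ≤ a₂ b₂`. The rest is an elementary
extremal problem: writing `b = (m⁴ + 1) / (m (m² + 1))` with `m ≥ 1`, these constraints force
`a₃ - b₃ ≤ m - 1 / m`, and `m - 1 / m` is exactly `A(b) b`.
-/

open MeasureTheory

noncomputable def thirdMomentConst (b : ℝ) : ℝ :=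
  Real.sqrt ((1 / 2) * Real.sqrt (1 + 8 / b ^ 2) + 1 / 2 - 2 / b ^ 2)

lemma exists_one_le_mul_eq_pow_four_add_one (b : ℝ) (hb : 1 ≤ b) :
    ∃ m : ℝ, 1 ≤ m ∧ b * (m * (m ^ 2 + 1)) = m ^ 4 + 1 := by
  set f : ℝ → ℝ := fun m => m ^ 4 + 1 - b * (m * (m ^ 2 + 1))
  have hf : ContinuousOn f (Set.Icc 1 (b + 1)) := by fun_prop
  have h0 : (0 : ℝ) ∈ Set.Icc (f 1) (f (b + 1)) := by
    constructor
    · simp only [f]; nlinarith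
    · simp only [f]; nlinarith [sq_nonneg b]
  obtain ⟨m, ⟨hm, -⟩, hfm⟩ := intermediate_value_Icc (by linarith) hf h0
  exact ⟨m, hm, by simp only [f] at hfm; linarith⟩

lemma thirdMomentConst_mul_eq {b m : ℝ} (hm : 1 ≤ m) (hb : b * (m * (m ^ 2 + 1)) = m ^ 4 + 1) :
    thirdMomentConst b * b = m - m⁻¹ := by
  have hm0 : 0 < m := by linarith
  have hb' : b = (m ^ 4 + 1) / (m * (m ^ 2 + 1)) := by
    rw [eq_div_iff (by positivity)]; exact hb
  have hinner : Real.sqrt (1 + 8 / b ^ 2) = (m ^ 4 + 4 * m ^ 2 + 1) / (m ^ 4 + 1) := by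
    rw [Real.sqrt_eq_iff_mul_self_eq_of_pos (by positivity), hb']
    field_simp
    ring
  have hsq : (1 / 2) * Real.sqrt (1 + 8 / b ^ 2) + 1 / 2 - 2 / b ^ 2
      = ((m ^ 2 + 1) * (m ^ 2 - 1) / (m ^ 4 + 1)) ^ 2 := by
    rw [hinner, hb']
    field_simp
    ring
  have hnn : 0 ≤ (m ^ 2 + 1) * (m ^ 2 - 1) / (m ^ 4 + 1) := by
    have : 0 ≤ m ^ 2 - 1 := by nlinarith
    positivity
  rw [thirdMomentConst, hsq, Real.sqrt_sq hnn, hb']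
  field_simp

lemma one_sub_le_pow_three_mul_of_le {u β : ℝ} (hu : 1 ≤ u)
    (h : u ≤ (u + 1) ^ 2 * (β * (1 - β))) : 1 - β ≤ β ^ 3 * (u * (u + 1) ^ 2) := by
  rcases le_or_gt (1 / 2 : ℝ) β with hβ | hβ
  · have h8 : (1 / 2 : ℝ) ^ 3 ≤ β ^ 3 := pow_le_pow_left₀ (by norm_num) hβ 3
    have h4 : (4 : ℝ) ≤ u * (u + 1) ^ 2 := by nlinarith
    nlinarith
  · -- `h` says `(β (u + 1) - 1) (β (u + 1) - u) ≤ 0`, and `β (u + 1) < u`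
    have hroot : 1 ≤ β * (u + 1) := by nlinarith
    have h3 : 1 ≤ (β * (u + 1)) ^ 3 := one_le_pow₀ hroot
    nlinarith

lemma sub_le_of_moment_bounds {m b c a₂ b₂ a₃ b₃ : ℝ} (hm : 1 ≤ m)
    (hb : b * (m * (m ^ 2 + 1)) = m ^ 4 + 1) (hc0 : 0 ≤ c) (h₂ : a₂ + b₂ = 1)
    (hc : c ^ 2 ≤ a₂ * b₂) (ha₃ : a₂ ^ 2 ≤ c * a₃) (hb₃ : b₂ ^ 2 ≤ c * b₃)
    (hsum : a₃ + b₃ = b) : a₃ - b₃ ≤ m - m⁻¹ := by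
  obtain rfl : a₂ = 1 - b₂ := by linarith
  have hm0 : 0 < m := by linarith
  have hb₂ : 0 ≤ b₂ := by nlinarith
  have hk : 0 < m * (m ^ 2 + 1) := by positivity
  have hc_pos : 0 < c := by
    refine hc0.lt_of_ne fun hc_eq => ?_
    subst hc_eq
    nlinarith
  have hP : 1 - 2 * (b₂ * (1 - b₂)) ≤ c * b := by
    have : c * a₃ + c * b₃ = c * b := by rw [← hsum]; ring
    linear_combination ha₃ + hb₃ + this
  have hP_sq : (1 - 2 * (b₂ * (1 - b₂))) ^ 2 ≤ b₂ * (1 - b₂) * b ^ 2 := by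
    have h0 : 0 ≤ 1 - 2 * (b₂ * (1 - b₂)) := by nlinarith [sq_nonneg (2 * b₂ - 1)]
    nlinarith [pow_le_pow_left₀ h0 hP 2, mul_le_mul_of_nonneg_right hc (sq_nonneg b)]
  have hb₂_lower : m ^ 2 ≤ (m ^ 2 + 1) ^ 2 * (b₂ * (1 - b₂)) := by
    have hfactor : (m ^ 2 - (m ^ 2 + 1) ^ 2 * (b₂ * (1 - b₂)))
        * ((m ^ 2 + 1) ^ 2 - 4 * m ^ 2 * (b₂ * (1 - b₂))) ≤ 0 := by
      have hb2 : b ^ 2 * (m * (m ^ 2 + 1)) ^ 2 = (m ^ 4 + 1) ^ 2 := by rw [← hb]; ring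
      linear_combination (m * (m ^ 2 + 1)) ^ 2 * hP_sq + b₂ * (1 - b₂) * hb2
    have hpos : 0 < (m ^ 2 + 1) ^ 2 - 4 * m ^ 2 * (b₂ * (1 - b₂)) := by
      nlinarith [sq_nonneg (2 * b₂ - 1), sq_nonneg m]
    nlinarith
  have hcore := one_sub_le_pow_three_mul_of_le (by nlinarith) hb₂_lower
  have hc_le : c ≤ b₂ ^ 2 * (m * (m ^ 2 + 1)) := by
    refine (pow_le_pow_iff_left₀ hc0 (by positivity) two_ne_zero).1 ?_
    nlinarith [mul_le_mul_of_nonneg_left hcore hb₂]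
  have key : c * (m ^ 2 + 1) * (m * (a₃ - b₃)) ≤ c * (m ^ 2 + 1) * (m ^ 2 - 1) := by
    obtain rfl : a₃ = b - b₃ := by linarith
    nlinarith [mul_le_mul_of_nonneg_left hb₃ hk.le, congrArg (c * ·) hb]
  have hr : m - m⁻¹ = (m ^ 2 - 1) / m := by field_simp
  rw [hr, le_div_iff₀ hm0]
  nlinarith [le_of_mul_le_mul_left key (by positivity)]

section CauchySchwarz

variable {α : Type*} [MeasurableSpace α] {ν : Measure α} {w g : α → ℝ}

lemma sq_integral_mul_le_integral_mul_integral_mul_sq (hw : 0 ≤ᵐ[ν] w) (hw1 : Integrable w ν)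
    (hwg : Integrable (fun x => w x * g x) ν) (hwg2 : Integrable (fun x => w x * g x ^ 2) ν) :
    (∫ x, w x * g x ∂ν) ^ 2 ≤ (∫ x, w x ∂ν) * ∫ x, w x * g x ^ 2 ∂ν := by
  have hquad : ∀ t : ℝ, 0 ≤ (∫ x, w x * g x ^ 2 ∂ν) * (t * t)
      + (-2 * ∫ x, w x * g x ∂ν) * t + ∫ x, w x ∂ν := by
    intro t
    have hexp : ∫ x, w x * (t * g x - 1) ^ 2 ∂ν
        = (t * t) * ∫ x, w x * g x ^ 2 ∂ν + (-2 * t) * ∫ x, w x * g x ∂ν + ∫ x, w x ∂ν := by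
      rw [← integral_const_mul, ← integral_const_mul,
        ← integral_add (hwg2.const_mul _) (hwg.const_mul _),
        ← integral_add ?_ hw1]
      · congr 1 with x; ring
      · exact (hwg2.const_mul _).add (hwg.const_mul _)
    have := integral_nonneg_of_ae (μ := ν) (f := fun x => w x * (t * g x - 1) ^ 2)
      (hw.mono fun x hx => mul_nonneg hx (sq_nonneg _))
    linarith
  have := discrim_le_zero hquad
  rw [discrim] at this
  linarith

lemma sq_integral_sq_le_integral_mul_integral_pow_three {f : α → ℝ} (hf : 0 ≤ᵐ[ν] f)
    (h1 : Integrable f ν) (h2 : Integrable (fun x => f x ^ 2) ν)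
    (h3 : Integrable (fun x => f x ^ 3) ν) :
    (∫ x, f x ^ 2 ∂ν) ^ 2 ≤ (∫ x, f x ∂ν) * ∫ x, f x ^ 3 ∂ν := by
  have key := sq_integral_mul_le_integral_mul_integral_mul_sq (g := f) hf h1
    (by simpa only [← sq] using h2) (by simpa only [← pow_succ'] using h3)
  simpa only [← sq, ← pow_succ'] using key

lemma sq_integral_le_measureReal_mul_integral_sq [IsFiniteMeasure ν] {s : Set α}
    (hs : ∀ x ∉ s, g x = 0) (hg : Integrable g ν) (hg2 : Integrable (fun x => g x ^ 2) ν) :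
    (∫ x, g x ∂ν) ^ 2 ≤ ν.real s * ∫ x, g x ^ 2 ∂ν := by
  have key := sq_integral_mul_le_integral_mul_integral_mul_sq (ν := ν.restrict s)
    (w := fun _ => 1) (g := g) (ae_of_all _ fun _ => zero_le_one) (integrable_const 1)
    (by simpa using hg.restrict) (by simpa using hg2.restrict)
  simp only [one_mul, integral_const, measureReal_restrict_apply_univ, smul_eq_mul, mul_one] at key
  rwa [setIntegral_eq_integral_of_forall_compl_eq_zero hs,
    setIntegral_eq_integral_of_forall_compl_eq_zero (fun x hx => by simp [hs x hx])] at key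

end CauchySchwarz

lemma abs_pow_eq_posPart_pow_add_negPart_pow (x : ℝ) {n : ℕ} (hn : n ≠ 0) :
    |x| ^ n = x⁺ ^ n + x⁻ ^ n := by
  rcases le_total 0 x with h | h <;> simp [h, hn, abs_of_nonneg, abs_of_nonpos]

lemma Odd.pow_eq_posPart_pow_sub_negPart_pow {n : ℕ} (hn : Odd n) (x : ℝ) :
    x ^ n = x⁺ ^ n - x⁻ ^ n := by
  rcases le_total 0 x with h | h <;> simp [h, hn.pos.ne', hn.neg_pow]

section PosNegParts

variable {Ω : Type*} [MeasurableSpace Ω] {μ : Measure Ω} {X : Ω → ℝ} {n : ℕ}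

lemma integrable_posPart_pow (hX : AEStronglyMeasurable X μ)
    (h : Integrable (fun ω => |X ω| ^ n) μ) : Integrable (fun ω => (X ω)⁺ ^ n) μ :=
  h.mono' ((continuous_posPart.pow n).comp_aestronglyMeasurable hX) <| ae_of_all _ fun ω => by
    rw [Real.norm_eq_abs, abs_pow, abs_of_nonneg (posPart_nonneg _)]
    exact pow_le_pow_left₀ (posPart_nonneg _) (sup_le (le_abs_self _) (abs_nonneg _)) n

lemma integrable_negPart_pow (hX : AEStronglyMeasurable X μ)
    (h : Integrable (fun ω => |X ω| ^ n) μ) : Integrable (fun ω => (X ω)⁻ ^ n) μ := by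
  simpa using integrable_posPart_pow hX.neg (by simpa using h)

lemma integral_abs_pow_eq_add (hX : AEStronglyMeasurable X μ) (hn : n ≠ 0)
    (h : Integrable (fun ω => |X ω| ^ n) μ) :
    ∫ ω, |X ω| ^ n ∂μ = ∫ ω, (X ω)⁺ ^ n ∂μ + ∫ ω, (X ω)⁻ ^ n ∂μ := by
  rw [← integral_add (integrable_posPart_pow hX h) (integrable_negPart_pow hX h)]
  congr 1 with ω
  exact abs_pow_eq_posPart_pow_add_negPart_pow _ hn

lemma Odd.integral_pow_eq_sub (hn : Odd n) (hX : AEStronglyMeasurable X μ)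
    (h : Integrable (fun ω => |X ω| ^ n) μ) :
    ∫ ω, X ω ^ n ∂μ = ∫ ω, (X ω)⁺ ^ n ∂μ - ∫ ω, (X ω)⁻ ^ n ∂μ := by
  rw [← integral_sub (integrable_posPart_pow hX h) (integrable_negPart_pow hX h)]
  congr 1 with ω
  exact hn.pow_eq_posPart_pow_sub_negPart_pow _

lemma integral_posPart_eq_integral_negPart (h1 : Integrable X μ) (hm : ∫ ω, X ω ∂μ = 0) :
    ∫ ω, (X ω)⁺ ∂μ = ∫ ω, (X ω)⁻ ∂μ := by
  have h := odd_one.integral_pow_eq_sub h1.aestronglyMeasurable (by simpa using h1.abs)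
  simp only [pow_one] at h
  linarith

lemma sq_integral_posPart_mul_le [IsProbabilityMeasure μ] (h1 : Integrable X μ)
    (h2 : Integrable (fun ω => X ω ^ 2) μ) (hm : ∫ ω, X ω ∂μ = 0) :
    (∫ ω, (X ω)⁺ ∂μ) ^ 2 * (∫ ω, (X ω)⁺ ^ 2 ∂μ + ∫ ω, (X ω)⁻ ^ 2 ∂μ)
      ≤ (∫ ω, (X ω)⁺ ^ 2 ∂μ) * ∫ ω, (X ω)⁻ ^ 2 ∂μ := by
  have hX := h1.aestronglyMeasurable
  have h1' : Integrable (fun ω => |X ω| ^ 1) μ := by simpa using h1.abs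
  have h2' : Integrable (fun ω => |X ω| ^ 2) μ := by simpa using h2
  have hmean := integral_posPart_eq_integral_negPart h1 hm
  set S := {ω | 0 < X ω}
  have hp := sq_integral_le_measureReal_mul_integral_sq (s := S)
    (fun ω hω => posPart_eq_zero.2 (not_lt.1 hω))
    (by simpa using integrable_posPart_pow hX h1') (integrable_posPart_pow hX h2')
  have hq := sq_integral_le_measureReal_mul_integral_sq (s := Sᶜ)
    (fun ω hω => negPart_eq_zero.2 (not_not.1 hω).le)
    (by simpa using integrable_negPart_pow hX h1') (integrable_negPart_pow hX h2')
  have hpq : μ.real S + μ.real Sᶜ = 1 := by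
    rw [measureReal_add_measureReal_compl₀ (nullMeasurableSet_lt aemeasurable_const h1.aemeasurable),
      probReal_univ]
  have ha : 0 ≤ ∫ ω, (X ω)⁺ ^ 2 ∂μ := integral_nonneg fun ω => sq_nonneg _
  have hb : 0 ≤ ∫ ω, (X ω)⁻ ^ 2 ∂μ := integral_nonneg fun ω => sq_nonneg _
  rw [← hmean] at hq
  nlinarith [mul_le_mul_of_nonneg_right hp hb, mul_le_mul_of_nonneg_right hq ha,
    congrArg (· * ((∫ ω, (X ω)⁺ ^ 2 ∂μ) * ∫ ω, (X ω)⁻ ^ 2 ∂μ)) hpq]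

lemma sq_integral_posPart_sq_le (h1 : Integrable X μ) (h2 : Integrable (fun ω => X ω ^ 2) μ)
    (h3 : Integrable (fun ω => |X ω| ^ 3) μ) :
    (∫ ω, (X ω)⁺ ^ 2 ∂μ) ^ 2 ≤ (∫ ω, (X ω)⁺ ∂μ) * ∫ ω, (X ω)⁺ ^ 3 ∂μ := by
  have hX := h1.aestronglyMeasurable
  exact sq_integral_sq_le_integral_mul_integral_pow_three
    (ae_of_all μ fun ω => posPart_nonneg (X ω))
    (by simpa using integrable_posPart_pow (n := 1) hX (by simpa using h1.abs))
    (integrable_posPart_pow hX (by simpa using h2)) (integrable_posPart_pow hX h3)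

end PosNegParts

theorem third_moment_inequality_general
    {Ω : Type*} [MeasurableSpace Ω] (μ : Measure Ω) [IsProbabilityMeasure μ]
    (X : Ω → ℝ) (b : ℝ) (hb : 1 ≤ b)
    (h1 : Integrable X μ) (h2 : Integrable (fun ω => X ω ^ 2) μ)
    (h3 : Integrable (fun ω => |X ω| ^ 3) μ)
    (hm1 : ∫ ω, X ω ∂μ = 0) (hm2 : ∫ ω, X ω ^ 2 ∂μ = 1)
    (hm3 : ∫ ω, |X ω| ^ 3 ∂μ = b) :
    |∫ ω, X ω ^ 3 ∂μ| ≤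
      Real.sqrt ((1 / 2) * Real.sqrt (1 + 8 / b ^ 2) + 1 / 2 - 2 / b ^ 2) * b := by
  obtain ⟨m, hm, hbm⟩ := exists_one_le_mul_eq_pow_four_add_one b hb
  have hX := h1.aestronglyMeasurable
  have hmean := integral_posPart_eq_integral_negPart h1 hm1
  have hsecond : ∫ ω, (X ω)⁺ ^ 2 ∂μ + ∫ ω, (X ω)⁻ ^ 2 ∂μ = 1 := by
    rw [← integral_abs_pow_eq_add hX two_ne_zero (by simpa using h2)]
    simpa using hm2
  have hthird : ∫ ω, (X ω)⁺ ^ 3 ∂μ + ∫ ω, (X ω)⁻ ^ 3 ∂μ = b := by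
    rw [← integral_abs_pow_eq_add hX three_ne_zero h3, hm3]
  have hc : (∫ ω, (X ω)⁺ ∂μ) ^ 2 ≤ (∫ ω, (X ω)⁺ ^ 2 ∂μ) * ∫ ω, (X ω)⁻ ^ 2 ∂μ := by
    simpa [hsecond] using sq_integral_posPart_mul_le h1 h2 hm1
  have hc0 : 0 ≤ ∫ ω, (X ω)⁺ ∂μ := integral_nonneg fun ω => posPart_nonneg _
  have hpos := sq_integral_posPart_sq_le h1 h2 h3
  have hneg : (∫ ω, (X ω)⁻ ^ 2 ∂μ) ^ 2 ≤ (∫ ω, (X ω)⁺ ∂μ) * ∫ ω, (X ω)⁻ ^ 3 ∂μ := by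
    simpa [hmean] using sq_integral_posPart_sq_le h1.neg (by simpa using h2) (by simpa using h3)
  change |_| ≤ thirdMomentConst b * b
  rw [thirdMomentConst_mul_eq hm hbm, (by decide : Odd 3).integral_pow_eq_sub hX h3, abs_le]
  constructor
  · linarith [sub_le_of_moment_bounds hm hbm hc0 (by linarith) (by linarith) hneg hpos
      (by linarith)]
  · exact sub_le_of_moment_bounds hm hbm hc0 hsecond hc hpos hneg hthird

theorem third_moment_inequality
    {Ω : Type*} [MeasurableSpace Ω] (μ : Measure Ω) [IsProbabilityMeasure μ]
    (X : Ω → ℝ) (hX : Measurable X) (b : ℝ) (hb : 1 ≤ b)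
    (h1 : Integrable X μ) (h2 : Integrable (fun ω => X ω ^ 2) μ)
    (h3 : Integrable (fun ω => |X ω| ^ 3) μ)
    (hm1 : ∫ ω, X ω ∂μ = 0) (hm2 : ∫ ω, X ω ^ 2 ∂μ = 1)
    (hm3 : ∫ ω, |X ω| ^ 3 ∂μ = b) :
    |∫ ω, X ω ^ 3 ∂μ| ≤
      Real.sqrt ((1 / 2) * Real.sqrt (1 + 8 / b ^ 2) + 1 / 2 - 2 / b ^ 2) * b :=
  third_moment_inequality_general μ X b hb h1 h2 h3 hm1 hm2 hm3
end

section
/- For b ≥ 1 let u = sqrt( b·sqrt(b²+8)/2 − b²/2 − 1 ) and let X be the two-point random variable with P(X = sqrt((1−u)/(1+u))) = (1+u)/2 and P(X = −sqrt((1+u)/(1−u))) = (1−u)/2. Then E X = 0, E X² = 1, E|X|³ = b, and |E X³| = A(b)·b, where A(b) = sqrt((1/2)sqrt(1+8/b²) + 1/2 − 2/b²). -/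
/-!
For every `u ∈ (-1, 1)` the two-point law with atoms `√((1-u)/(1+u))`, `-√((1+u)/(1-u))` and
weights `(1+u)/2`, `(1-u)/2` is centred with unit variance, its third absolute moment is
`(1+u²)/√(1-u²)` and its third moment is `-2u/√(1-u²)`. The given `u` makes `u²` the nonnegative
root of `v² + (b²+2)v + 1 - b² = 0`, i.e. `(1+u²)² = b²(1-u²)`, so the third absolute moment is `b`;
the same relation gives `4u²/(1-u²) = u² + b² - 1 = A(b)²b²`.
-/

open MeasureTheory

theorem integral_comp_eq_of_twoPoint {Ω α E : Type*} [MeasurableSpace Ω] [MeasurableSpace α]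
    [MeasurableSingletonClass α] [NormedAddCommGroup E] [NormedSpace ℝ E] [CompleteSpace E]
    {μ : Measure Ω} [IsProbabilityMeasure μ] {X : Ω → α} (hX : Measurable X) {x y : α}
    (hxy : x ≠ y) {p q : ℝ} (hp0 : 0 ≤ p) (hq0 : 0 ≤ q) (hpq : p + q = 1)
    (hp : μ {ω | X ω = x} = ENNReal.ofReal p) (hq : μ {ω | X ω = y} = ENNReal.ofReal q)
    (f : α → E) :
    ∫ ω, f (X ω) ∂μ = p • f x + q • f y := by
  set A := {ω | X ω = x}
  set B := {ω | X ω = y}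
  have hA : MeasurableSet A := hX (measurableSet_singleton x)
  have hB : MeasurableSet B := hX (measurableSet_singleton y)
  have hdisj : Disjoint A B := Set.disjoint_left.2 fun ω hωx hωy => hxy (hωx.symm.trans hωy)
  have hAB : ∀ᵐ ω ∂μ, ω ∈ A ∪ B := by
    rw [ae_mem_iff_measure_eq (hA.union hB).nullMeasurableSet, measure_union hdisj hB, hp, hq,
      ← ENNReal.ofReal_add hp0 hq0, hpq, ENNReal.ofReal_one, measure_univ]
  have hae : (fun ω => f (X ω)) =ᵐ[μ]
      fun ω => A.indicator (fun _ => f x) ω + B.indicator (fun _ => f y) ω := by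
    filter_upwards [hAB] with ω hω
    rcases hω with hωx | hωy
    · simp [Set.indicator_of_mem hωx, Set.indicator_of_notMem (Set.disjoint_left.1 hdisj hωx),
        show X ω = x from hωx]
    · simp [Set.indicator_of_mem hωy, Set.indicator_of_notMem (Set.disjoint_right.1 hdisj hωy),
        show X ω = y from hωy]
  rw [integral_congr_ae hae, integral_add ((integrable_const _).indicator hA)
    ((integrable_const _).indicator hB), integral_indicator_const _ hA,
    integral_indicator_const _ hB, measureReal_def, measureReal_def, hp, hq,
    ENNReal.toReal_ofReal hp0, ENNReal.toReal_ofReal hq0]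

theorem twoPoint_mean {u : ℝ} (hu₀ : -1 < u) (hu₁ : u < 1) :
    (1 + u) / 2 * √((1 - u) / (1 + u)) + (1 - u) / 2 * -√((1 + u) / (1 - u)) = 0 := by
  have hr := Real.sq_sqrt (show 0 ≤ 1 - u by linarith)
  have ht := Real.sq_sqrt (show 0 ≤ 1 + u by linarith)
  have hr0 : 0 < √(1 - u) := Real.sqrt_pos.2 (by linarith)
  have ht0 : 0 < √(1 + u) := Real.sqrt_pos.2 (by linarith)
  rw [Real.sqrt_div' _ (by linarith), Real.sqrt_div' _ (by linarith)]
  field_simp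
  grind

theorem twoPoint_second_moment {u : ℝ} (hu₀ : -1 < u) (hu₁ : u < 1) :
    (1 + u) / 2 * √((1 - u) / (1 + u)) ^ 2 + (1 - u) / 2 * (-√((1 + u) / (1 - u))) ^ 2 = 1 := by
  have h1 : 1 - u ≠ 0 := by linarith
  have h2 : 1 + u ≠ 0 := by linarith
  rw [neg_sq, Real.sq_sqrt (div_nonneg (by linarith) (by linarith)),
    Real.sq_sqrt (div_nonneg (by linarith) (by linarith))]
  field_simp
  ring

theorem twoPoint_abs_third_moment {u : ℝ} (hu₀ : -1 < u) (hu₁ : u < 1) :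
    (1 + u) / 2 * √((1 - u) / (1 + u)) ^ 3 + (1 - u) / 2 * √((1 + u) / (1 - u)) ^ 3 =
      (1 + u ^ 2) / √(1 - u ^ 2) := by
  have hr := Real.sq_sqrt (show 0 ≤ 1 - u by linarith)
  have ht := Real.sq_sqrt (show 0 ≤ 1 + u by linarith)
  have hr0 : 0 < √(1 - u) := Real.sqrt_pos.2 (by linarith)
  have ht0 : 0 < √(1 + u) := Real.sqrt_pos.2 (by linarith)
  rw [Real.sqrt_div' _ (by linarith), Real.sqrt_div' _ (by linarith),
    show 1 - u ^ 2 = (1 - u) * (1 + u) by ring, Real.sqrt_mul (by linarith)]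
  field_simp
  grind

theorem twoPoint_third_moment {u : ℝ} (hu₀ : -1 < u) (hu₁ : u < 1) :
    (1 + u) / 2 * √((1 - u) / (1 + u)) ^ 3 + (1 - u) / 2 * (-√((1 + u) / (1 - u))) ^ 3 =
      -(2 * u / √(1 - u ^ 2)) := by
  have hr := Real.sq_sqrt (show 0 ≤ 1 - u by linarith)
  have ht := Real.sq_sqrt (show 0 ≤ 1 + u by linarith)
  have hr0 : 0 < √(1 - u) := Real.sqrt_pos.2 (by linarith)
  have ht0 : 0 < √(1 + u) := Real.sqrt_pos.2 (by linarith)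
  rw [Real.sqrt_div' _ (by linarith), Real.sqrt_div' _ (by linarith),
    show 1 - u ^ 2 = (1 - u) * (1 + u) by ring, Real.sqrt_mul (by linarith)]
  field_simp
  grind

noncomputable def extremalParam (b : ℝ) : ℝ :=
  √(b * √(b ^ 2 + 8) / 2 - b ^ 2 / 2 - 1)

theorem extremalParam_nonneg (b : ℝ) : 0 ≤ extremalParam b := Real.sqrt_nonneg _

theorem extremalParam_lt_one (b : ℝ) : extremalParam b < 1 := by
  have hs := Real.sq_sqrt (show 0 ≤ b ^ 2 + 8 by positivity)
  have hs0 := Real.sqrt_nonneg (b ^ 2 + 8)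
  rw [extremalParam, Real.sqrt_lt' one_pos]
  nlinarith [sq_nonneg (b * √(b ^ 2 + 8) + b ^ 2 + 4)]

theorem extremalParam_sq {b : ℝ} (hb : 1 ≤ b) :
    extremalParam b ^ 2 = b * √(b ^ 2 + 8) / 2 - b ^ 2 / 2 - 1 := by
  have hs := Real.sq_sqrt (show 0 ≤ b ^ 2 + 8 by positivity)
  refine Real.sq_sqrt ?_
  nlinarith [mul_nonneg (by linarith : (0:ℝ) ≤ b) (Real.sqrt_nonneg (b ^ 2 + 8)),
    mul_le_mul hb hb zero_le_one (by linarith)]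

theorem extremalParam_sq_quadratic {b : ℝ} (hb : 1 ≤ b) :
    (extremalParam b ^ 2) ^ 2 + (b ^ 2 + 2) * extremalParam b ^ 2 + 1 - b ^ 2 = 0 := by
  have hs := Real.sq_sqrt (show 0 ≤ b ^ 2 + 8 by positivity)
  rw [extremalParam_sq hb]
  linear_combination b ^ 2 / 4 * hs

theorem one_add_sq_extremalParam_div {b : ℝ} (hb : 1 ≤ b) :
    (1 + extremalParam b ^ 2) / √(1 - extremalParam b ^ 2) = b := by
  set u := extremalParam b
  have hu1 : u < 1 := extremalParam_lt_one b
  have hu0 : 0 ≤ u := extremalParam_nonneg b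
  have hw0 : 0 < √(1 - u ^ 2) := Real.sqrt_pos.2 (by nlinarith)
  rw [div_eq_iff hw0.ne', ← Real.sqrt_sq (by positivity : 0 ≤ 1 + u ^ 2),
    ← Real.sqrt_sq (by positivity : 0 ≤ b), ← Real.sqrt_mul (sq_nonneg b)]
  congr 1
  linear_combination extremalParam_sq_quadratic hb

noncomputable def momentRatioBound (b : ℝ) : ℝ :=
  √((1 / 2) * √(1 + 8 / b ^ 2) + 1 / 2 - 2 / b ^ 2)

theorem momentRatioBound_mul_self {b : ℝ} (hb : 1 ≤ b) :
    momentRatioBound b * b = √(extremalParam b ^ 2 + b ^ 2 - 1) := by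
  have hb0 : 0 < b := by linarith
  have hmul (x : ℝ) : √x * b = √(x * b ^ 2) := by
    rw [Real.sqrt_mul' _ (sq_nonneg b), Real.sqrt_sq hb0.le]
  have hs : √(1 + 8 / b ^ 2) * b = √(b ^ 2 + 8) := by
    rw [hmul]
    congr 1
    field_simp
  rw [momentRatioBound, hmul, extremalParam_sq hb]
  congr 1
  rw [← hs]
  field_simp
  ring

theorem two_mul_extremalParam_div {b : ℝ} (hb : 1 ≤ b) :
    2 * extremalParam b / √(1 - extremalParam b ^ 2) = momentRatioBound b * b := by
  set u := extremalParam b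
  have hu1 : u < 1 := extremalParam_lt_one b
  have hu0 : 0 ≤ u := extremalParam_nonneg b
  have hw : 0 < 1 - u ^ 2 := by nlinarith
  rw [momentRatioBound_mul_self hb, ← Real.sqrt_sq (by positivity : 0 ≤ 2 * u),
    ← Real.sqrt_div' _ hw.le]
  congr 1
  field_simp
  linear_combination extremalParam_sq_quadratic hb

theorem third_moment_extremal_distribution
    {Ω : Type*} [MeasurableSpace Ω] (μ : Measure Ω) [IsProbabilityMeasure μ]
    (X : Ω → ℝ) (hX : Measurable X) (b u : ℝ) (hb : 1 ≤ b)
    (hu : u = Real.sqrt (b * Real.sqrt (b ^ 2 + 8) / 2 - b ^ 2 / 2 - 1))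
    (hp : μ {ω | X ω = Real.sqrt ((1 - u) / (1 + u))} = ENNReal.ofReal ((1 + u) / 2))
    (hq : μ {ω | X ω = -Real.sqrt ((1 + u) / (1 - u))} = ENNReal.ofReal ((1 - u) / 2)) :
    (∫ ω, X ω ∂μ) = 0 ∧ (∫ ω, X ω ^ 2 ∂μ) = 1 ∧ (∫ ω, |X ω| ^ 3 ∂μ) = b ∧
    |∫ ω, X ω ^ 3 ∂μ| =
      Real.sqrt ((1 / 2) * Real.sqrt (1 + 8 / b ^ 2) + 1 / 2 - 2 / b ^ 2) * b := by
  obtain rfl : u = extremalParam b := hu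
  have hu_nonneg : 0 ≤ extremalParam b := extremalParam_nonneg b
  have hu_lt_one : extremalParam b < 1 := extremalParam_lt_one b
  have hu_gt : -1 < extremalParam b := by linarith
  have hatoms : √((1 - extremalParam b) / (1 + extremalParam b)) ≠
      -√((1 + extremalParam b) / (1 - extremalParam b)) := by
    have hc := Real.sqrt_pos.2 (div_pos (by linarith : 0 < 1 + extremalParam b)
      (by linarith : 0 < 1 - extremalParam b))
    linarith [Real.sqrt_nonneg ((1 - extremalParam b) / (1 + extremalParam b))]
  have hmoment (f : ℝ → ℝ) := integral_comp_eq_of_twoPoint hX hatoms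
    (by linarith) (by linarith) (by ring) hp hq f
  refine ⟨(hmoment fun x => x).trans (twoPoint_mean hu_gt hu_lt_one),
    (hmoment fun x => x ^ 2).trans (twoPoint_second_moment hu_gt hu_lt_one), ?_, ?_⟩
  · rw [hmoment fun x => |x| ^ 3]
    simp only [smul_eq_mul, abs_neg, abs_of_nonneg (Real.sqrt_nonneg _)]
    rw [twoPoint_abs_third_moment hu_gt hu_lt_one, one_add_sq_extremalParam_div hb]
  · rw [(hmoment fun x => x ^ 3).trans (twoPoint_third_moment hu_gt hu_lt_one), abs_neg,
      abs_of_nonneg (div_nonneg (by linarith) (Real.sqrt_nonneg _))]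
    exact two_mul_extremalParam_div hb
end

section
/- The function A(b) = sqrt((1/2)·sqrt(1 + 8/b²) + 1/2 − 2/b²) is concave on [1, ∞), and the function b ↦ b·A(b) is also concave on [1, ∞). -/
/-!
Put `s = 1 / b` and `τ(s) = (√(1 + 8 s²) - 1) / 2`; then `A(b) = g(s)` with `g(s) = √(1 - τ(s)²)`.
On `[0, 1]` the map `τ` is convex, increasing and stays in `[0, 1]`, where `t ↦ √(1 - t²)` is
concave and decreasing, so `g` is concave and decreasing on `[0, 1]`. As `b ↦ 1 / b` is convex on
`[1, ∞)`, `A = g ∘ (1 / ·)` is concave there, and `b ↦ b A(b) = b g(1 / b)` is concave as the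
perspective of the concave function `g`.
-/

open Set Real

section Composition

variable {𝕜 E α β : Type*} [Semiring 𝕜] [PartialOrder 𝕜] [AddCommMonoid E] [AddCommMonoid α]
  [PartialOrder α] [AddCommMonoid β] [PartialOrder β] [SMul 𝕜 E] [SMul 𝕜 α] [SMul 𝕜 β]
  {s : Set E} {t : Set β} {f : E → β} {g : β → α}

theorem ConcaveOn.comp_of_mapsTo (hg : ConcaveOn 𝕜 t g) (hf : ConcaveOn 𝕜 s f)
    (hg' : MonotoneOn g t) (hst : MapsTo f s t) : ConcaveOn 𝕜 s (g ∘ f) :=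
  ⟨hf.1, fun _ hx _ hy _ _ ha hb hab =>
    (hg.2 (hst hx) (hst hy) ha hb hab).trans <|
      hg' (hg.1 (hst hx) (hst hy) ha hb hab) (hst <| hf.1 hx hy ha hb hab) <|
        hf.2 hx hy ha hb hab⟩

theorem ConcaveOn.comp_convexOn_of_mapsTo (hg : ConcaveOn 𝕜 t g) (hf : ConvexOn 𝕜 s f)
    (hg' : AntitoneOn g t) (hst : MapsTo f s t) : ConcaveOn 𝕜 s (g ∘ f) :=
  ⟨hf.1, fun _ hx _ hy _ _ ha hb hab =>
    (hg.2 (hst hx) (hst hy) ha hb hab).trans <|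
      hg' (hst <| hf.1 hx hy ha hb hab) (hg.1 (hst hx) (hst hy) ha hb hab) <|
        hf.2 hx hy ha hb hab⟩

end Composition

theorem ConcaveOn.mul_comp_inv {s t : Set ℝ} {f : ℝ → ℝ} (hf : ConcaveOn ℝ s f)
    (ht : Convex ℝ t) (ht₀ : t ⊆ Ioi 0) (hts : MapsTo (·⁻¹) t s) :
    ConcaveOn ℝ t fun x => x * f x⁻¹ := by
  refine ⟨ht, fun x hx y hy a b ha hb hab => ?_⟩
  have hx₀ : 0 < x := ht₀ hx
  have hy₀ : 0 < y := ht₀ hy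
  set z := a • x + b • y with hz
  have hz₀ : 0 < z := ht₀ (ht hx hy ha hb hab)
  simp only [smul_eq_mul] at hz ⊢
  -- reweighting by `a x / z` and `b y / z` turns the combination of `x⁻¹` and `y⁻¹` into `z⁻¹`
  have hweights : a * x / z + b * y / z = 1 := by field_simp; exact hz.symm
  have hcomb : (a * x / z) • x⁻¹ + (b * y / z) • y⁻¹ = z⁻¹ := by
    simp only [smul_eq_mul]
    field_simp
    exact hab
  have key := hf.2 (hts hx) (hts hy) (by positivity) (by positivity) hweights
  rw [hcomb, smul_eq_mul, smul_eq_mul] at key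
  calc a * (x * f x⁻¹) + b * (y * f y⁻¹)
      = z * (a * x / z * f x⁻¹ + b * y / z * f y⁻¹) := by field_simp
    _ ≤ z * f z⁻¹ := by gcongr

theorem convexOn_sqrt_add_mul_sq {c k : ℝ} (hc : 0 ≤ c) (hk : 0 ≤ k) :
    ConvexOn ℝ univ fun x => √(c + k * x ^ 2) := by
  refine ⟨convex_univ, fun x _ y _ a b ha hb hab => ?_⟩
  simp only [smul_eq_mul]
  set X := √(c + k * x ^ 2)
  set Y := √(c + k * y ^ 2)
  have hX : X ^ 2 = c + k * x ^ 2 := sq_sqrt (by positivity)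
  have hY : Y ^ 2 = c + k * y ^ 2 := sq_sqrt (by positivity)
  -- Cauchy–Schwarz: `(c + k x²)(c + k y²) = (c + k x y)² + c k (x - y)²`
  have hXY : c + k * x * y ≤ X * Y := by
    rw [← sqrt_mul (by positivity)]
    refine (le_abs_self _).trans (abs_le_sqrt ?_)
    nlinarith [mul_nonneg (mul_nonneg hc hk) (sq_nonneg (x - y))]
  rw [sqrt_le_left (by positivity)]
  have h2 := mul_le_mul_of_nonneg_left hXY (mul_nonneg ha hb)
  linear_combination 2 * h2 - a ^ 2 * hX - b ^ 2 * hY - c * (a + b + 1) * hab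

theorem concaveOn_sqrt_one_sub_sq : ConcaveOn ℝ (Icc (-1) 1) fun t => √(1 - t ^ 2) :=
  strictConcaveOn_sqrt.concaveOn.comp_of_mapsTo
    ((concaveOn_const 1 (convex_Icc _ _)).sub
      ((Even.convexOn_pow even_two).subset (subset_univ _) (convex_Icc _ _)))
    (sqrt_monotone.monotoneOn _)
    fun t ht => by simp only [mem_Ici, sub_nonneg]; nlinarith [ht.1, ht.2]

theorem antitoneOn_sqrt_one_sub_sq : AntitoneOn (fun t => √(1 - t ^ 2)) (Ici 0) :=
  fun _ hx _ _ hxy => sqrt_le_sqrt (sub_le_sub_left (pow_le_pow_left₀ hx hxy 2) 1)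

namespace AConcavity

noncomputable def tau (s : ℝ) : ℝ := (√(1 + 8 * s ^ 2) - 1) / 2

noncomputable def profile (s : ℝ) : ℝ := √(1 - tau s ^ 2)

theorem convexOn_tau : ConvexOn ℝ univ tau := by
  refine (((convexOn_sqrt_add_mul_sq zero_le_one (by norm_num : (0 : ℝ) ≤ 8)).smul
    (by norm_num : (0 : ℝ) ≤ 1 / 2)).add_const (-1 / 2)).congr fun s _ => ?_
  simp only [tau, Pi.add_apply, smul_eq_mul]
  ring

theorem monotoneOn_tau : MonotoneOn tau (Ici 0) := fun _ hx _ _ hxy => by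
  unfold tau
  gcongr

theorem mapsTo_tau : MapsTo tau (Icc 0 1) (Icc 0 1) := by
  rintro s ⟨hs₀, hs₁⟩
  have hlow : 1 ≤ √(1 + 8 * s ^ 2) := one_le_sqrt.2 (by nlinarith)
  have hup : √(1 + 8 * s ^ 2) ≤ 3 := (sqrt_le_left (by norm_num)).2 (by nlinarith)
  constructor <;> unfold tau <;> linarith

theorem concaveOn_profile : ConcaveOn ℝ (Icc 0 1) profile :=
  (concaveOn_sqrt_one_sub_sq.subset (Icc_subset_Icc (by norm_num) le_rfl) (convex_Icc _ _)
    ).comp_convexOn_of_mapsTo (convexOn_tau.subset (subset_univ _) (convex_Icc _ _))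
    (antitoneOn_sqrt_one_sub_sq.mono Icc_subset_Ici_self) mapsTo_tau

theorem antitoneOn_profile : AntitoneOn profile (Icc 0 1) :=
  (antitoneOn_sqrt_one_sub_sq.mono Icc_subset_Ici_self).comp_MonotoneOn
    (monotoneOn_tau.mono Icc_subset_Ici_self) mapsTo_tau

theorem profile_inv (b : ℝ) :
    profile b⁻¹ = √((1 / 2) * √(1 + 8 / b ^ 2) + 1 / 2 - 2 / b ^ 2) := by
  have hroot : √(1 + 8 / b ^ 2) ^ 2 = 1 + 8 / b ^ 2 := sq_sqrt (by positivity)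
  rw [profile, tau, inv_pow, ← div_eq_mul_inv]
  congr 1
  linear_combination -hroot / 4

end AConcavity

theorem A_concavity (A : ℝ → ℝ)
    (hA : ∀ b : ℝ, A b = Real.sqrt ((1 / 2) * Real.sqrt (1 + 8 / b ^ 2) + 1 / 2 - 2 / b ^ 2)) :
    ConcaveOn ℝ (Set.Ici 1) A ∧ ConcaveOn ℝ (Set.Ici 1) (fun b => b * A b) := by
  obtain rfl : A = fun b => AConcavity.profile b⁻¹ :=
    funext fun b => by rw [hA, AConcavity.profile_inv]
  have hinv : MapsTo (·⁻¹) (Ici (1 : ℝ)) (Icc 0 1) := fun b hb =>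
    ⟨inv_nonneg.2 (zero_le_one.trans hb), inv_le_one_of_one_le₀ hb⟩
  have hconvex_inv : ConvexOn ℝ (Ici (1 : ℝ)) fun b => b⁻¹ := by
    simpa only [zpow_neg_one] using
      (convexOn_zpow (-1)).subset (Ici_subset_Ioi.2 one_pos) (convex_Ici (1 : ℝ))
  exact ⟨AConcavity.concaveOn_profile.comp_convexOn_of_mapsTo hconvex_inv
      AConcavity.antitoneOn_profile hinv,
    AConcavity.concaveOn_profile.mul_comp_inv (convex_Ici 1) (Ici_subset_Ioi.2 one_pos) hinv⟩
end

section
/- Let X be a random variable with E|X| < ∞ and characteristic function f(t) = E e^{itX}. Then for all t ∈ ℝ, |f(t) − 1| ≤ κ₁ |t| E|X| + (sin θ₁*/θ₁*)·|t|·|E X|, where θ₁* ∈ (0,π) is the unique root of x sin x + cos x − 1 = 0, κ₁ = (1 − cos θ₁*)/θ₁*; in particular if E X = 0 then |f(t) − 1| ≤ 0.7247·|t|·E|X|. -/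
/-!
Put `c = sin θ / θ` and `s = sin θ`. The root equation `θ sin θ + cos θ = 1` says
`θ = tan (θ / 2)`, so `c = 2 / (1 + θ²)`, `s = 2θ / (1 + θ²) = (1 - cos θ) / θ` and
`s² = 2c - c²`. Writing `f(t) - 1 = E[e^{itX} - 1 - ictX] + ict E X`, the theorem follows from
the pointwise bound `|e^{iy} - 1 - icy| ≤ s |y|`, which after squaring reads
`1 - cos y - c y sin y ≤ c (1 - c) y²`.

The gap in this inequality has a double zero at `y = θ`, so no crude estimate works near `θ`:
on `[2, 4]` the gap is convex and its minimum is the critical point `θ`. On `[0, 2]` an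
alternating Taylor bound for `sin` and `cos` suffices, and on `[4, ∞)` the trivial one does.
Taylor bounds also locate `θ` in `[2.331, 2.332]` through the intermediate value theorem, which
is where the numerical constants come from.
-/

open MeasureTheory Real Finset Set

open scoped Nat

noncomputable def cosTaylor (n : ℕ) (x : ℝ) : ℝ := ∑ k ∈ range n, (-1) ^ k * x ^ (2 * k) / (2 * k)!

noncomputable def sinTaylor (n : ℕ) (x : ℝ) : ℝ :=
  ∑ k ∈ range n, (-1) ^ k * x ^ (2 * k + 1) / (2 * k + 1)!

lemma hasDerivAt_sinTaylor (n : ℕ) (x : ℝ) : HasDerivAt (sinTaylor n) (cosTaylor n x) x := by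
  induction n with
  | zero =>
    have : sinTaylor 0 = fun _ => 0 := by funext y; simp [sinTaylor]
    simpa [this, cosTaylor] using hasDerivAt_const x (0 : ℝ)
  | succ n ih =>
    have h := ((hasDerivAt_pow (2 * n + 1) x).const_mul ((-1 : ℝ) ^ n)).div_const
      ((2 * n + 1)! : ℝ)
    have e : sinTaylor (n + 1) =
        fun y => sinTaylor n y + (-1) ^ n * y ^ (2 * n + 1) / (2 * n + 1)! := by
      funext y; simp [sinTaylor, sum_range_succ]
    rw [e]
    refine (ih.add h).congr_deriv ?_
    simp only [cosTaylor, sum_range_succ, Nat.factorial_succ]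
    push_cast
    field_simp

lemma hasDerivAt_cosTaylor_succ (n : ℕ) (x : ℝ) :
    HasDerivAt (cosTaylor (n + 1)) (-sinTaylor n x) x := by
  induction n with
  | zero =>
    have : cosTaylor 1 = fun _ => 1 := by funext y; simp [cosTaylor]
    simpa [this, sinTaylor] using hasDerivAt_const x (1 : ℝ)
  | succ n ih =>
    have h := ((hasDerivAt_pow (2 * n + 2) x).const_mul ((-1 : ℝ) ^ (n + 1))).div_const
      ((2 * n + 2)! : ℝ)
    have e : cosTaylor (n + 2) =
        fun y => cosTaylor (n + 1) y + (-1) ^ (n + 1) * y ^ (2 * n + 2) / (2 * n + 2)! := by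
      funext y; simp only [cosTaylor, sum_range_succ (n := n + 1), add_right_inj]; ring_nf
    rw [e]
    refine (ih.add h).congr_deriv ?_
    simp only [sinTaylor, sum_range_succ, Nat.factorial_succ]
    push_cast
    field_simp
    ring

lemma nonneg_of_hasDerivAt_nonneg {f f' : ℝ → ℝ} (hf : ∀ x, HasDerivAt f (f' x) x)
    (h0 : f 0 = 0) (hf' : ∀ x, 0 ≤ x → 0 ≤ f' x) {x : ℝ} (hx : 0 ≤ x) : 0 ≤ f x := by
  have hmono : MonotoneOn f (Ici 0) :=
    monotoneOn_of_hasDerivWithinAt_nonneg (convex_Ici 0)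
      (fun y _ => (hf y).continuousAt.continuousWithinAt) (fun y _ => (hf y).hasDerivWithinAt)
      (fun y hy => hf' y (interior_subset hy))
  simpa [h0] using hmono self_mem_Ici hx hx

lemma sin_sub_sinTaylor_alternating {n : ℕ}
    (h : ∀ x, 0 ≤ x → 0 ≤ (-1) ^ n * (cos x - cosTaylor n x)) {x : ℝ} (hx : 0 ≤ x) :
    0 ≤ (-1) ^ n * (sin x - sinTaylor n x) :=
  nonneg_of_hasDerivAt_nonneg
    (fun y => ((hasDerivAt_sin y).sub (hasDerivAt_sinTaylor n y)).const_mul ((-1) ^ n))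
    (by simp [sinTaylor]) h hx

lemma cos_sub_cosTaylor_succ_alternating {n : ℕ}
    (h : ∀ x, 0 ≤ x → 0 ≤ (-1) ^ n * (sin x - sinTaylor n x)) {x : ℝ} (hx : 0 ≤ x) :
    0 ≤ (-1) ^ (n + 1) * (cos x - cosTaylor (n + 1) x) := by
  refine nonneg_of_hasDerivAt_nonneg
    (fun y => ((hasDerivAt_cos y).sub (hasDerivAt_cosTaylor_succ n y)).const_mul ((-1) ^ (n + 1)))
    (by simp [cosTaylor, sum_range_succ']) (fun y hy => ?_) hx
  have := h y hy
  rw [pow_succ]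
  linarith

lemma cos_sub_cosTaylor_alternating (n : ℕ) {x : ℝ} (hx : 0 ≤ x) :
    0 ≤ (-1) ^ (n + 1) * (cos x - cosTaylor (n + 1) x) := by
  induction n generalizing x with
  | zero => simpa [cosTaylor] using cos_le_one x
  | succ n ih =>
    exact cos_sub_cosTaylor_succ_alternating
      (fun y hy => sin_sub_sinTaylor_alternating (fun z hz => ih hz) hy) hx

lemma cos_le_cosTaylor (m : ℕ) {x : ℝ} (hx : 0 ≤ x) : cos x ≤ cosTaylor (2 * m + 1) x := by
  have := cos_sub_cosTaylor_alternating (2 * m) hx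
  rw [(odd_two_mul_add_one m).neg_one_pow] at this
  linarith

lemma cosTaylor_le_cos (m : ℕ) {x : ℝ} (hx : 0 ≤ x) : cosTaylor (2 * m + 2) x ≤ cos x := by
  have := cos_sub_cosTaylor_alternating (2 * m + 1) hx
  rw [(show Even (2 * m + 1 + 1) from ⟨m + 1, by ring⟩).neg_one_pow] at this
  linarith

lemma sin_le_sinTaylor (m : ℕ) {x : ℝ} (hx : 0 ≤ x) : sin x ≤ sinTaylor (2 * m + 1) x := by
  have := sin_sub_sinTaylor_alternating (fun y hy => cos_sub_cosTaylor_alternating (2 * m) hy) hx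
  rw [(odd_two_mul_add_one m).neg_one_pow] at this
  linarith

lemma sinTaylor_le_sin (m : ℕ) {x : ℝ} (hx : 0 ≤ x) : sinTaylor (2 * m + 2) x ≤ sin x := by
  have := sin_sub_sinTaylor_alternating
    (fun y hy => cos_sub_cosTaylor_alternating (2 * m + 1) hy) hx
  rw [(show Even (2 * m + 1 + 1) from ⟨m + 1, by ring⟩).neg_one_pow] at this
  linarith

lemma exists_mul_sin_add_cos_sub_one_eq_zero :
    ∃ x ∈ Icc (2.331 : ℝ) 2.332, x * sin x + cos x - 1 = 0 := by
  have hlo : 0 ≤ (2.331 : ℝ) * sin 2.331 + cos 2.331 - 1 := by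
    have hs := sinTaylor_le_sin 2 (by norm_num : (0 : ℝ) ≤ 2.331)
    have hc := cosTaylor_le_cos 2 (by norm_num : (0 : ℝ) ≤ 2.331)
    norm_num [cosTaylor, sinTaylor, sum_range_succ, Nat.factorial] at hs hc
    linarith
  have hhi : (2.332 : ℝ) * sin 2.332 + cos 2.332 - 1 ≤ 0 := by
    have hs := sin_le_sinTaylor 3 (by norm_num : (0 : ℝ) ≤ 2.332)
    have hc := cos_le_cosTaylor 3 (by norm_num : (0 : ℝ) ≤ 2.332)
    norm_num [cosTaylor, sinTaylor, sum_range_succ, Nat.factorial] at hs hc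
    linarith
  exact intermediate_value_Icc' (by norm_num) (by fun_prop) ⟨hhi, hlo⟩

lemma sin_cos_eq_of_mul_sin_add_cos_sub_one_eq_zero {θ : ℝ} (hsin : sin θ ≠ 0)
    (h : θ * sin θ + cos θ - 1 = 0) :
    sin θ = 2 * θ / (1 + θ ^ 2) ∧ cos θ = (1 - θ ^ 2) / (1 + θ ^ 2) := by
  have hcos : cos θ ≠ 1 := fun h1 => hsin (by nlinarith [sin_sq_add_cos_sq θ])
  have hθ : θ ≠ 0 := by rintro rfl; simp at hcos
  have hpos : 0 < 1 + θ ^ 2 := by positivity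
  have hcos' : (1 + θ ^ 2) * cos θ = 1 - θ ^ 2 := by
    refine mul_left_cancel₀ (sub_ne_zero.2 (Ne.symm hcos)) ?_
    linear_combination (θ * sin θ - cos θ + 1) * h - θ ^ 2 * (sin_sq_add_cos_sq θ)
  have hc : cos θ = (1 - θ ^ 2) / (1 + θ ^ 2) := by rw [eq_div_iff hpos.ne']; linarith
  refine ⟨?_, hc⟩
  rw [hc] at h
  field_simp at h ⊢
  apply mul_left_cancel₀ hθ
  linear_combination h

noncomputable def expGap (c y : ℝ) : ℝ := c * (1 - c) * y ^ 2 - (1 - cos y) + c * y * sin y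

section Pointwise

open Complex

lemma norm_exp_I_mul_sub_one_sub_sq (c y : ℝ) :
    ‖cexp (I * y) - 1 - I * (c * y)‖ ^ 2 = (2 * c - c ^ 2) * y ^ 2 - 2 * expGap c y := by
  have hexp : cexp (I * y) = Real.cos y + Real.sin y * I := by
    rw [mul_comm, exp_mul_I, ← ofReal_cos, ← ofReal_sin]
  rw [Complex.sq_norm, normSq_apply, hexp]
  simp only [expGap, sub_re, sub_im, add_re, add_im, mul_re, mul_im, ofReal_re, ofReal_im, I_re,
    I_im, one_re, one_im]
  linear_combination Real.sin_sq_add_cos_sq y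

lemma norm_exp_I_mul_sub_one_sub_le {c s : ℝ} (hs : 0 ≤ s) (hcs : s ^ 2 = 2 * c - c ^ 2)
    {y : ℝ} (hy : 0 ≤ expGap c y) : ‖cexp (I * y) - 1 - I * (c * y)‖ ≤ s * |y| := by
  refine le_of_sq_le_sq ?_ (by positivity)
  rw [norm_exp_I_mul_sub_one_sub_sq, mul_pow, sq_abs, hcs]
  linarith

end Pointwise

lemma expGap_neg (c y : ℝ) : expGap c (-y) = expGap c y := by
  simp only [expGap, cos_neg, sin_neg]
  ring

lemma hasDerivAt_expGap (c y : ℝ) :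
    HasDerivAt (expGap c) (2 * c * (1 - c) * y - (1 - c) * sin y + c * y * cos y) y := by
  have h := (((hasDerivAt_pow 2 y).const_mul (c * (1 - c))).sub
    ((hasDerivAt_const y (1 : ℝ)).sub (hasDerivAt_cos y))).add
    (((hasDerivAt_id y).const_mul c).mul (hasDerivAt_sin y))
  refine h.congr_deriv ?_
  simp only [Nat.cast_ofNat, Nat.add_one_sub_one, pow_one, sub_neg_eq_add, zero_add, mul_one, id_eq]
  ring

lemma hasDerivAt_expGap_deriv (c y : ℝ) :
    HasDerivAt (fun y => 2 * c * (1 - c) * y - (1 - c) * sin y + c * y * cos y)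
      (2 * c * (1 - c) + (2 * c - 1) * cos y - c * y * sin y) y := by
  have h := (((hasDerivAt_id y).const_mul (2 * c * (1 - c))).sub
    ((hasDerivAt_sin y).const_mul (1 - c))).add
    (((hasDerivAt_id y).const_mul c).mul (hasDerivAt_cos y))
  refine h.congr_deriv ?_
  simp only [mul_one, id_eq, mul_neg]
  ring

lemma expGap_eq_zero_and_hasDerivAt_zero {θ : ℝ} (hsin : sin θ = 2 * θ / (1 + θ ^ 2))
    (hcos : cos θ = (1 - θ ^ 2) / (1 + θ ^ 2)) :
    expGap (2 / (1 + θ ^ 2)) θ = 0 ∧ HasDerivAt (expGap (2 / (1 + θ ^ 2))) 0 θ := by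
  have hpos : 0 < 1 + θ ^ 2 := by positivity
  refine ⟨?_, (hasDerivAt_expGap _ θ).congr_deriv ?_⟩
  · rw [expGap, hsin, hcos]; field_simp; ring
  · rw [hsin, hcos]; field_simp; ring

-- The interval `[0.3106, 0.3109]` contains `2 / (1 + θ²)` for every `θ ∈ [2.331, 2.332]`.
lemma expGap_nonneg_of_le_two {c y : ℝ} (hc : c ∈ Icc (0.3106 : ℝ) 0.3109) (hy₀ : 0 ≤ y)
    (hy₂ : y ≤ 2) : 0 ≤ expGap c y := by
  obtain ⟨hc₀, hc₁⟩ := hc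
  have hcos := cosTaylor_le_cos 2 hy₀
  have hsin := sinTaylor_le_sin 1 hy₀
  norm_num [cosTaylor, sinTaylor, sum_range_succ, Nat.factorial] at hcos hsin
  have hv₀ : 0 ≤ y ^ 2 := sq_nonneg y
  have hv₄ : y ^ 2 ≤ 4 := by nlinarith
  have hpoly : 0 ≤ (2 * c - c ^ 2 - 1 / 2) + y ^ 2 * (1 / 24 - c / 6)
      + (y ^ 2) ^ 2 * (c / 120 - 1 / 720) + (y ^ 2) ^ 3 * (1 / 40320 - c / 5040)
      - (y ^ 2) ^ 4 / 3628800 := by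
    nlinarith [mul_nonneg hv₀ (sub_nonneg.2 hv₄), mul_nonneg (sub_nonneg.2 hc₀) (sub_nonneg.2 hv₄),
      mul_nonneg (mul_nonneg hv₀ hv₀) (sub_nonneg.2 hv₄)]
  have hsin' : c * y * (y - y ^ 3 / 6 + y ^ 5 / 120 - y ^ 7 / 5040) ≤ c * y * sin y :=
    mul_le_mul_of_nonneg_left (by linarith) (by positivity)
  unfold expGap
  nlinarith [mul_nonneg hv₀ hpoly]

lemma expGap_nonneg_of_four_le {c y : ℝ} (hc : c ∈ Icc (0.3106 : ℝ) 0.3109) (hy : 4 ≤ y) :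
    0 ≤ expGap c y := by
  obtain ⟨hc₀, hc₁⟩ := hc
  have hcy : 0 ≤ c * y := by positivity
  have hsin : -(c * y) ≤ c * y * sin y := by nlinarith [neg_one_le_sin y]
  have hk : 0.214 * y ^ 2 ≤ c * (1 - c) * y ^ 2 := by gcongr; nlinarith
  unfold expGap
  nlinarith [neg_one_le_cos y]

lemma expGap_deriv2_nonneg {c y : ℝ} (hc : c ∈ Icc (0.3106 : ℝ) 0.3109)
    (hy : y ∈ Icc (2 : ℝ) 4) : 0 ≤ 2 * c * (1 - c) + (2 * c - 1) * cos y - c * y * sin y := by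
  obtain ⟨hc₀, hc₁⟩ := hc
  obtain ⟨hy₂, hy₄⟩ := hy
  -- Reflecting at `π` keeps the Taylor arguments below `π - 2 < 1.15`.
  obtain ⟨z, rfl⟩ : ∃ z, y = π - z := ⟨π - y, by ring⟩
  rw [cos_pi_sub, sin_pi_sub]
  rcases le_total 0 z with hz | hz
  · have hzπ : z ≤ 1.1416 := by linarith [pi_lt_d4]
    have hcos := cosTaylor_le_cos 1 hz
    have hsin := sin_le_sinTaylor 1 hz
    norm_num [cosTaylor, sinTaylor, sum_range_succ, Nat.factorial] at hcos hsin
    have hsin₀ : 0 ≤ sin z := sin_nonneg_of_nonneg_of_le_pi hz (by linarith [pi_gt_three])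
    have hpoly : 0 ≤ 2 * c * (1 - c) + (1 - 2 * c) * (1 - z ^ 2 / 2 + z ^ 4 / 24 - z ^ 6 / 720)
        - c * (3.1416 - z) * (z - z ^ 3 / 6 + z ^ 5 / 120) := by
      nlinarith [mul_nonneg hz (sub_nonneg.2 hzπ), mul_nonneg (sub_nonneg.2 hc₁) hz,
        mul_nonneg (sub_nonneg.2 hc₁) (sub_nonneg.2 hzπ), pow_nonneg hz 3, pow_nonneg hz 4,
        mul_nonneg (pow_nonneg hz 3) (sub_nonneg.2 hzπ),
        mul_nonneg (pow_nonneg hz 5) (sub_nonneg.2 hzπ)]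
    have hcos' : (1 - 2 * c) * (1 - z ^ 2 / 2 + z ^ 4 / 24 - z ^ 6 / 720) ≤ (1 - 2 * c) * cos z :=
      mul_le_mul_of_nonneg_left (by linarith) (by linarith)
    have hsin' : c * (π - z) * sin z ≤ c * (3.1416 - z) * (z - z ^ 3 / 6 + z ^ 5 / 120) := by
      have hc : 0 ≤ c * (3.1416 - z) := by nlinarith
      calc c * (π - z) * sin z ≤ c * (3.1416 - z) * sin z := by gcongr; linarith [pi_lt_d4]
        _ ≤ _ := by gcongr; linarith
    nlinarith
  · have hsin : sin z ≤ 0 := sin_nonpos_of_nonpos_of_neg_pi_le hz (by linarith [pi_gt_three])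
    have : 0 ≤ c * (π - z) * -sin z :=
      mul_nonneg (mul_nonneg (by linarith) (by linarith)) (neg_nonneg.2 hsin)
    nlinarith [neg_one_le_cos z]

lemma convexOn_expGap {c : ℝ} (hc : c ∈ Icc (0.3106 : ℝ) 0.3109) :
    ConvexOn ℝ (Icc 2 4) (expGap c) :=
  convexOn_of_hasDerivWithinAt2_nonneg (convex_Icc 2 4)
    (fun x _ => (hasDerivAt_expGap c x).continuousAt.continuousWithinAt)
    (fun x _ => (hasDerivAt_expGap c x).hasDerivWithinAt)
    (fun x _ => (hasDerivAt_expGap_deriv c x).hasDerivWithinAt)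
    (fun _ hx => expGap_deriv2_nonneg hc (interior_subset hx))

lemma expGap_nonneg {θ : ℝ} (hθ : θ ∈ Icc (2.331 : ℝ) 2.332)
    (hsin : sin θ = 2 * θ / (1 + θ ^ 2)) (hcos : cos θ = (1 - θ ^ 2) / (1 + θ ^ 2)) (y : ℝ) :
    0 ≤ expGap (2 / (1 + θ ^ 2)) y := by
  obtain ⟨hθ₁, hθ₂⟩ := hθ
  have hpos : 0 < 1 + θ ^ 2 := by positivity
  have hc : 2 / (1 + θ ^ 2) ∈ Icc (0.3106 : ℝ) 0.3109 := by
    constructor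
    · rw [le_div_iff₀ hpos]; nlinarith
    · rw [div_le_iff₀ hpos]; nlinarith
  wlog hy : 0 ≤ y generalizing y
  · simpa [expGap_neg] using this (-y) (by linarith)
  rcases le_total y 2 with hy₂ | hy₂
  · exact expGap_nonneg_of_le_two hc hy hy₂
  rcases le_total y 4 with hy₄ | hy₄
  · obtain ⟨hzero, hderiv⟩ := expGap_eq_zero_and_hasDerivAt_zero hsin hcos
    have hmin := (convexOn_expGap hc).isMinOn_of_rightDeriv_eq_zero
      (by rw [interior_Icc]; constructor <;> linarith)
      (hderiv.hasDerivWithinAt.derivWithin (uniqueDiffWithinAt_Ioi θ))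
    exact hzero ▸ hmin ⟨hy₂, hy₄⟩
  · exact expGap_nonneg_of_four_le hc hy₄

open Complex in
theorem norm_integral_exp_I_mul_sub_one_le {Ω : Type*} [MeasurableSpace Ω] {μ : Measure Ω}
    [IsProbabilityMeasure μ] {X : Ω → ℝ} (hX : Integrable X μ) {c s : ℝ}
    (h : ∀ y : ℝ, ‖cexp (I * y) - 1 - I * (c * y)‖ ≤ s * |y|) (t : ℝ) :
    ‖(∫ ω, cexp (I * t * X ω) ∂μ) - 1‖ ≤
      s * |t| * ∫ ω, |X ω| ∂μ + |c| * |t| * |∫ ω, X ω ∂μ| := by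
  have hlin : Integrable (fun ω => I * (c * t * X ω : ℂ)) μ :=
    (hX.ofReal.const_mul (c * t : ℂ)).const_mul I
  have hexp : Integrable (fun ω => cexp (I * t * X ω)) μ := by
    refine Integrable.of_bound (continuous_exp.comp_aestronglyMeasurable
      (hX.ofReal.const_mul (I * t)).aestronglyMeasurable) 1 (ae_of_all _ fun ω => ?_)
    rw [show I * t * X ω = ((t * X ω : ℝ) : ℂ) * I by push_cast; ring, norm_exp_ofReal_mul_I]
  have hsplit : (∫ ω, cexp (I * t * X ω) ∂μ) - 1 =
      (∫ ω, (cexp (I * t * X ω) - 1 - I * (c * t * X ω)) ∂μ) + I * (c * t * ∫ ω, X ω ∂μ) := by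
    rw [integral_sub (f := fun ω => cexp (I * t * X ω) - 1) (hexp.sub (integrable_const 1)) hlin,
      integral_sub hexp (integrable_const 1), integral_const_mul, integral_const_mul,
      integral_complex_ofReal]
    simp
  have hpt : ∀ ω, ‖cexp (I * t * X ω) - 1 - I * (c * t * X ω)‖ ≤ s * |t| * |X ω| := fun ω => by
    have := h (t * X ω)
    push_cast at this
    rw [abs_mul] at this
    simpa only [mul_assoc] using this
  calc ‖(∫ ω, cexp (I * t * X ω) ∂μ) - 1‖
      ≤ ‖∫ ω, (cexp (I * t * X ω) - 1 - I * (c * t * X ω)) ∂μ‖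
          + ‖I * (c * t * ∫ ω, X ω ∂μ)‖ := by
        rw [hsplit]; exact norm_add_le _ _
    _ ≤ (∫ ω, s * |t| * |X ω| ∂μ) + |c| * |t| * |∫ ω, X ω ∂μ| := by
        gcongr
        · exact norm_integral_le_of_norm_le (hX.abs.const_mul _) (ae_of_all _ hpt)
        · simp
    _ = s * |t| * ∫ ω, |X ω| ∂μ + |c| * |t| * |∫ ω, X ω ∂μ| := by rw [integral_const_mul]

theorem chf_first_order_bound_general
    {Ω : Type*} [MeasurableSpace Ω] (μ : Measure Ω) [IsProbabilityMeasure μ]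
    (X : Ω → ℝ) (hint : Integrable X μ)
    (θ : ℝ)
    (huniq : ∀ x ∈ Set.Ioo 0 Real.pi,
      x * Real.sin x + Real.cos x - 1 = 0 → x = θ)
    (t : ℝ) :
    ‖(∫ ω, Complex.exp (Complex.I * t * X ω) ∂μ) - 1‖ ≤
      ((1 - Real.cos θ) / θ) * |t| * (∫ ω, |X ω| ∂μ) +
      (Real.sin θ / θ) * |t| * |∫ ω, X ω ∂μ| ∧
    ((∫ ω, X ω ∂μ) = 0 →
      ‖(∫ ω, Complex.exp (Complex.I * t * X ω) ∂μ) - 1‖ ≤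
        0.7247 * |t| * (∫ ω, |X ω| ∂μ)) := by
  obtain ⟨hθ, hroot⟩ : θ ∈ Icc (2.331 : ℝ) 2.332 ∧ θ * sin θ + cos θ - 1 = 0 := by
    obtain ⟨x, hx, hroot⟩ := exists_mul_sin_add_cos_sub_one_eq_zero
    rw [← huniq x ⟨by linarith [hx.1], by linarith [hx.2, pi_gt_three]⟩ hroot]
    exact ⟨hx, hroot⟩
  have hθ₀ : 0 < θ := by linarith [hθ.1]
  obtain ⟨hsin, hcos⟩ := sin_cos_eq_of_mul_sin_add_cos_sub_one_eq_zero
    (sin_pos_of_pos_of_lt_pi hθ₀ (by linarith [hθ.2, pi_gt_three])).ne' hroot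
  have hpos : 0 < 1 + θ ^ 2 := by positivity
  have hbound := norm_integral_exp_I_mul_sub_one_le hint (fun y => norm_exp_I_mul_sub_one_sub_le
    (s := 2 * θ / (1 + θ ^ 2)) (by positivity) (by field_simp; ring)
    (expGap_nonneg hθ hsin hcos y)) t
  have hκ : (1 - cos θ) / θ = 2 * θ / (1 + θ ^ 2) := by rw [hcos]; field_simp; ring
  have hc : sin θ / θ = |2 / (1 + θ ^ 2)| := by rw [hsin, abs_of_pos (by positivity)]; field_simp
  have hs : 2 * θ / (1 + θ ^ 2) ≤ 0.7247 := by rw [div_le_iff₀ hpos]; nlinarith [hθ.1]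
  rw [hκ, hc]
  refine ⟨hbound, fun hmean => ?_⟩
  rw [hmean, abs_zero, mul_zero, add_zero] at hbound
  exact hbound.trans (by gcongr)

theorem chf_first_order_bound
    {Ω : Type*} [MeasurableSpace Ω] (μ : Measure Ω) [IsProbabilityMeasure μ]
    (X : Ω → ℝ) (hX : Measurable X) (hint : Integrable X μ)
    (θ : ℝ) (hθ : θ ∈ Set.Ioo 0 Real.pi)
    (heq : θ * Real.sin θ + Real.cos θ - 1 = 0)
    (huniq : ∀ x ∈ Set.Ioo 0 Real.pi,
      x * Real.sin x + Real.cos x - 1 = 0 → x = θ)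
    (t : ℝ) :
    ‖(∫ ω, Complex.exp (Complex.I * t * X ω) ∂μ) - 1‖ ≤
      ((1 - Real.cos θ) / θ) * |t| * (∫ ω, |X ω| ∂μ) +
      (Real.sin θ / θ) * |t| * |∫ ω, X ω ∂μ| ∧
    ((∫ ω, X ω ∂μ) = 0 →
      ‖(∫ ω, Complex.exp (Complex.I * t * X ω) ∂μ) - 1‖ ≤
        0.7247 * |t| * (∫ ω, |X ω| ∂μ)) :=
  chf_first_order_bound_general μ X hint θ huniq t
end
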